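/- arXiv:2411.12122 — 7 statements merged into one kernel-verified Lean document; each statement's English description precedes it below -/
import Mathlib

section
/- Let X be a complex Banach space and T ∈ L(X) with sup_n ‖Tⁿ‖ < ∞. If T is uniformly mean ergodic (the Cesàro means T_{[n]} converge in operator norm), then 1 is not an accumulation point of the spectrum σ(T); i.e., either 1 ∉ σ(T) or 1 is an isolated point of σ(T). -/
open Filter Topology

/-- The `n`-th Cesàro mean `(1/n) ∑_{j=1}^n T^j` of a continuous linear operator. -/
noncomputable def cesaroMean {X : Type*} [NormedAddCommGroup X] [NormedSpace ℂ X]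
    (T : X →L[ℂ] X) (n : ℕ) : X →L[ℂ] X :=
  (n : ℂ)⁻¹ • ∑ j ∈ Finset.range n, T ^ (j + 1)

open Polynomial

noncomputable def mfun (n : ℕ) (z : ℂ) : ℂ := (n : ℂ)⁻¹ * ∑ j ∈ Finset.range n, z ^ (j + 1)

noncomputable def cesPoly (n : ℕ) : Polynomial ℂ :=
  Polynomial.C ((n:ℂ)⁻¹) * ∑ j ∈ Finset.range n, Polynomial.X ^ (j + 1)

lemma cesPoly_eval (n : ℕ) (z : ℂ) : (cesPoly n).eval z = mfun n z := by
  simp [cesPoly, mfun, eval_finset_sum]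

lemma cesPoly_aeval {X : Type*} [NormedAddCommGroup X] [NormedSpace ℂ X]
    (T : X →L[ℂ] X) (n : ℕ) : Polynomial.aeval T (cesPoly n) = cesaroMean T n := by
  simp [cesPoly, cesaroMean, map_sum, Algebra.algebraMap_eq_smul_one, smul_mul_assoc]

lemma pow_sub_one_norm (z : ℂ) (hz : ‖z‖ ≤ 1) (m : ℕ) : ‖z ^ m - 1‖ ≤ m * ‖z - 1‖ := by
  induction m with
  | zero => simp
  | succ k ih =>
    have : z ^ (k+1) - 1 = z ^ k * (z - 1) + (z ^ k - 1) := by ring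
    rw [this]
    calc ‖z ^ k * (z - 1) + (z ^ k - 1)‖ ≤ ‖z ^ k * (z-1)‖ + ‖z ^ k - 1‖ := norm_add_le _ _
    _ ≤ 1 * ‖z - 1‖ + k * ‖z - 1‖ := by
        gcongr
        · rw [norm_mul]
          gcongr
          calc ‖z ^ k‖ = ‖z‖ ^ k := norm_pow _ _
          _ ≤ 1 ^ k := by gcongr
          _ = 1 := one_pow _
    _ = (k + 1 : ℕ) * ‖z - 1‖ := by push_cast; ring

lemma mfun_near_one (z : ℂ) (hz : ‖z‖ ≤ 1) (n : ℕ) (hn : 1 ≤ n) :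
    ‖mfun n z - 1‖ ≤ n * ‖z - 1‖ := by
  have hne : (n : ℂ) ≠ 0 := Nat.cast_ne_zero.mpr (by omega)
  have h1 : mfun n z - 1 = (n:ℂ)⁻¹ * ∑ j ∈ Finset.range n, (z ^ (j+1) - 1) := by
    rw [mfun, Finset.sum_sub_distrib, Finset.sum_const, Finset.card_range, mul_sub]
    field_simp
    simp [nsmul_eq_mul]
  rw [h1, norm_mul, norm_inv]
  have h2 : ‖∑ j ∈ Finset.range n, (z ^ (j+1) - 1)‖ ≤ ∑ j ∈ Finset.range n, ((n:ℝ) * ‖z - 1‖) := by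
    refine (norm_sum_le _ _).trans (Finset.sum_le_sum fun j hj => ?_)
    refine (pow_sub_one_norm z hz (j+1)).trans ?_
    have hjn : (j:ℝ) + 1 ≤ n := by
      have := Finset.mem_range.mp hj
      exact_mod_cast Nat.succ_le_of_lt this
    push_cast
    nlinarith [norm_nonneg (z-1)]
  rw [Finset.sum_const, Finset.card_range, nsmul_eq_mul] at h2
  rw [Complex.norm_natCast]
  have hnpos : (0:ℝ) < n := by positivity
  calc ((n:ℝ))⁻¹ * ‖∑ j ∈ Finset.range n, (z ^ (j+1) - 1)‖
      ≤ ((n:ℝ))⁻¹ * ((n:ℝ) * ((n:ℝ) * ‖z - 1‖)) := by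
        exact mul_le_mul_of_nonneg_left h2 (by positivity)
  _ = (n:ℝ) * ‖z - 1‖ := by field_simp

lemma sum_pow_norm_le (z : ℂ) (hz : ‖z‖ ≤ 1) (n : ℕ) :
    ‖∑ j ∈ Finset.range n, z ^ (j + 1)‖ ≤ n := by
  refine (norm_sum_le _ _).trans ?_
  calc ∑ j ∈ Finset.range n, ‖z ^ (j+1)‖ ≤ ∑ j ∈ Finset.range n, (1:ℝ) := by
        refine Finset.sum_le_sum fun j _ => ?_
        rw [norm_pow]
        calc ‖z‖ ^ (j+1) ≤ 1 ^ (j+1) := by gcongr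
        _ = 1 := one_pow _
  _ = n := by simp

lemma mfun_small (z : ℂ) (hz : ‖z‖ ≤ 1) (hz1 : z ≠ 1) (n : ℕ) :
    ‖mfun n z‖ ≤ 2 / (n * ‖z - 1‖) := by
  rcases Nat.eq_zero_or_pos n with h | h
  · subst h; simp [mfun]
  have hzne : z - 1 ≠ 0 := sub_ne_zero.mpr hz1
  have hsum : ∑ j ∈ Finset.range n, z ^ (j + 1) = z * ((z ^ n - 1) / (z - 1)) := by
    rw [← geom_sum_eq hz1, Finset.mul_sum]
    exact Finset.sum_congr rfl fun j _ => by ring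
  rw [mfun, hsum, norm_mul, norm_mul, norm_div, norm_inv, Complex.norm_natCast]
  have h1 : ‖z ^ n - 1‖ ≤ 2 := by
    calc ‖z ^ n - 1‖ ≤ ‖z ^ n‖ + ‖(1:ℂ)‖ := norm_sub_le _ _
    _ ≤ 1 + 1 := by
        rw [norm_pow, norm_one]
        gcongr
        calc ‖z‖ ^ n ≤ 1 ^ n := by gcongr
        _ = 1 := one_pow _
    _ = 2 := by norm_num
  have hnpos : (0:ℝ) < n := by positivity
  have hzpos : (0:ℝ) < ‖z - 1‖ := norm_pos_iff.mpr hzne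
  rw [div_eq_mul_inv (2:ℝ), mul_inv]
  calc ((n:ℝ))⁻¹ * (‖z‖ * (‖z ^ n - 1‖ / ‖z - 1‖))
      ≤ ((n:ℝ))⁻¹ * (1 * (2 / ‖z - 1‖)) := by gcongr
  _ = 2 * (((n:ℝ))⁻¹ * ‖z - 1‖⁻¹) := by rw [div_eq_mul_inv]; ring

lemma mfun_step (z : ℂ) (hz : ‖z‖ ≤ 1) (n : ℕ) :
    ‖mfun (n+1) z - mfun n z‖ ≤ 2 / (n+1) := by
  rcases Nat.eq_zero_or_pos n with h | h
  · subst h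
    simp only [mfun]
    norm_num
    calc ‖z‖ ≤ 1 := hz
    _ ≤ 2 := by norm_num
  have hne : (n:ℂ) ≠ 0 := Nat.cast_ne_zero.mpr (by omega)
  have hne1 : ((n:ℂ)+1) ≠ 0 := by
    intro hcon
    have : ((n+1 : ℕ) : ℂ) = 0 := by push_cast; linear_combination hcon
    exact (Nat.cast_ne_zero.mpr (by omega)) this
  set S := ∑ j ∈ Finset.range n, z ^ (j+1) with hS
  have hsplit : mfun (n+1) z - mfun n z
      = ((n:ℂ)+1)⁻¹ * z ^ (n+1) + (((n:ℂ)+1)⁻¹ - (n:ℂ)⁻¹) * S := by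
    rw [mfun, mfun, Finset.sum_range_succ, ← hS]
    push_cast
    ring
  rw [hsplit]
  have hS_le : ‖S‖ ≤ n := sum_pow_norm_le z hz n
  have hz1 : ‖z ^ (n+1)‖ ≤ 1 := by
    rw [norm_pow]
    calc ‖z‖ ^ (n+1) ≤ 1 ^ (n+1) := by gcongr
    _ = 1 := one_pow _
  have hcoef : ‖((n:ℂ)+1)⁻¹ - (n:ℂ)⁻¹‖ = ((n:ℝ) * ((n:ℝ)+1))⁻¹ := by
    have : ((n:ℂ)+1)⁻¹ - (n:ℂ)⁻¹ = (((((n:ℝ)) * ((n:ℝ)+1))⁻¹ : ℝ) : ℂ) * (-1) := by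
      have hne' : ((n:ℝ)) ≠ 0 := Nat.cast_ne_zero.mpr (by omega)
      push_cast
      field_simp
      ring
    rw [this, norm_mul, Complex.norm_real, norm_neg, norm_one, mul_one,
      Real.norm_of_nonneg (by positivity)]
  have hn1 : ‖((n:ℂ)+1)⁻¹‖ = (((n:ℝ))+1)⁻¹ := by
    rw [norm_inv]
    congr 1
    have : ((n:ℂ)+1) = (((n:ℝ)+1 : ℝ) : ℂ) := by push_cast; ring
    rw [this, Complex.norm_real, Real.norm_of_nonneg (by positivity)]
  have hnpos : (0:ℝ) < n := by positivity
  calc ‖((n:ℂ)+1)⁻¹ * z ^ (n+1) + (((n:ℂ)+1)⁻¹ - (n:ℂ)⁻¹) * S‖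
      ≤ ‖((n:ℂ)+1)⁻¹ * z ^ (n+1)‖ + ‖(((n:ℂ)+1)⁻¹ - (n:ℂ)⁻¹) * S‖ := norm_add_le _ _
  _ ≤ ((n:ℝ)+1)⁻¹ * 1 + ((n:ℝ) * ((n:ℝ)+1))⁻¹ * n := by
      rw [norm_mul, norm_mul, hcoef, hn1]
      gcongr
  _ = 2 / ((n:ℝ)+1) := by field_simp; ring
  

section Op

variable {X : Type*} [NormedAddCommGroup X] [NormedSpace ℂ X] [CompleteSpace X]

/-- The key algebraic identity `Mₙ - T Mₙ = (1/n)(T - T^{n+1})`. -/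
lemma cesaro_sub_mul (T : X →L[ℂ] X) (n : ℕ) :
    cesaroMean T n - T * cesaroMean T n = (n:ℂ)⁻¹ • (T - T ^ (n+1)) := by
  rcases Nat.eq_zero_or_pos n with h | h
  · subst h; simp [cesaroMean]
  rw [cesaroMean, mul_smul_comm, ← smul_sub, Finset.mul_sum]
  congr 1
  have : ∀ j, T * T ^ (j+1) = T ^ (j+1+1) := fun j => (pow_succ' T (j+1)).symm
  simp_rw [this]
  rw [← Finset.sum_sub_distrib, Finset.sum_range_sub' (fun j => T ^ (j+1)) n, pow_one]

lemma proj_props (T : X →L[ℂ] X) (C : ℝ) (hbd : ∀ n : ℕ, ‖T ^ n‖ ≤ C)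
    (P : X →L[ℂ] X) (hP : Tendsto (cesaroMean T) atTop (𝓝 P)) :
    T * P = P ∧ P * P = P := by
  have hC0 : 0 ≤ C := le_trans (norm_nonneg _) (hbd 0)
  -- T * P = P
  have htendg : Tendsto (fun n : ℕ => (2*C) * (1 / (n:ℝ))) atTop (𝓝 0) := by
    have := tendsto_one_div_atTop_nhds_zero_nat.const_mul (2*C)
    simpa using this
  have htend0 : Tendsto (fun n => cesaroMean T n - T * cesaroMean T n) atTop (𝓝 0) := by
    refine squeeze_zero_norm (fun n => ?_) htendg
    rw [cesaro_sub_mul, norm_smul ((n:ℂ)⁻¹) (T - T^(n+1)), norm_inv, Complex.norm_natCast]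
    have hT1 : ‖T‖ ≤ C := by simpa using hbd 1
    have hbound : ‖T - T ^ (n+1)‖ ≤ 2 * C := by
      calc ‖T - T ^ (n+1)‖ ≤ ‖T‖ + ‖T ^ (n+1)‖ := norm_sub_le _ _
      _ ≤ 2 * C := by linarith [hbd (n+1)]
    calc ((n:ℝ))⁻¹ * ‖T - T ^ (n+1)‖ ≤ ((n:ℝ))⁻¹ * (2*C) := by
          gcongr
    _ = 2*C * (1/(n:ℝ)) := by ring
  have htend1 : Tendsto (fun n => cesaroMean T n - T * cesaroMean T n) atTop (𝓝 (P - T * P)) :=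
    hP.sub (tendsto_const_nhds.mul hP)
  have hTP : T * P = P := by
    have h2 : P - T * P = 0 := tendsto_nhds_unique htend1 htend0
    exact (sub_eq_zero.mp h2).symm
  -- powers fix P
  have hpow : ∀ j : ℕ, T ^ (j+1) * P = P := by
    intro j
    induction j with
    | zero => simpa [pow_one] using hTP
    | succ k ih =>
      rw [pow_succ' T (k+1), mul_assoc, ih, hTP]
  have hces : ∀ n : ℕ, 1 ≤ n → cesaroMean T n * P = P := by
    intro n hn
    have hne : (n:ℂ) ≠ 0 := Nat.cast_ne_zero.mpr (by omega)
    rw [cesaroMean, smul_mul_assoc, Finset.sum_mul]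
    simp_rw [hpow]
    rw [Finset.sum_const, Finset.card_range, ← Nat.cast_smul_eq_nsmul ℂ, smul_smul,
      inv_mul_cancel₀ hne, one_smul]
  have hPP : P * P = P := by
    have h1 : Tendsto (fun n => cesaroMean T n * P) atTop (𝓝 (P * P)) :=
      hP.mul tendsto_const_nhds
    have h2 : Tendsto (fun n => cesaroMean T n * P) atTop (𝓝 P) := by
      apply Tendsto.congr' _ (tendsto_const_nhds (α := ℕ) (x := P))
      filter_upwards [eventually_ge_atTop 1] with n hn
      exact (hces n hn).symm
    exact tendsto_nhds_unique h1 h2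
  exact ⟨hTP, hPP⟩

end Op

section Unit

variable {X : Type*} [NormedAddCommGroup X] [NormedSpace ℂ X] [CompleteSpace X]

lemma unit_away (P : X →L[ℂ] X) (hPP : P * P = P) (lam : ℂ)
    (h0 : (1:ℝ)/4 ≤ ‖lam‖) (h1 : (1:ℝ)/4 ≤ ‖lam - 1‖) (A : X →L[ℂ] X)
    (hsmall : ‖A - P‖ * (4 + 16 * ‖P‖) < 1) :
    lam ∉ spectrum ℂ A := by
  have hlam0 : lam ≠ 0 := by
    intro h; rw [h, norm_zero] at h0; linarith
  have hlam1 : lam - 1 ≠ 0 := by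
    intro h; rw [h, norm_zero] at h1; linarith
  set a : ℂ := lam⁻¹ with ha
  set b : ℂ := (lam * (lam - 1))⁻¹ with hb
  set R : X →L[ℂ] X := a • 1 + b • P with hR
  have expand : ∀ x y : ℂ,
      (lam • (1 : X →L[ℂ] X) - P) * (x • 1 + y • P) = (lam*x) • 1 + (lam*y - x - y) • P := by
    intro x y
    simp only [sub_mul, mul_add, smul_mul_assoc, mul_smul_comm, smul_smul, one_mul, mul_one, hPP]
    module
  have expand' : ∀ x y : ℂ,
      (x • 1 + y • P) * (lam • (1 : X →L[ℂ] X) - P) = (lam*x) • 1 + (lam*y - x - y) • P := by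
    intro x y
    simp only [sub_mul, mul_add, add_mul, mul_sub, smul_mul_assoc, mul_smul_comm, smul_smul,
      one_mul, mul_one, hPP]
    module
  have c1 : lam * a = 1 := mul_inv_cancel₀ hlam0
  have c2 : lam * b - a - b = 0 := by
    rw [ha, hb]
    field_simp
    ring
  have hmulL : (lam • (1 : X →L[ℂ] X) - P) * R = 1 := by
    rw [hR, expand a b, c1, c2]
    simp
  have hmulR : R * (lam • (1 : X →L[ℂ] X) - P) = 1 := by
    rw [hR, expand' a b, c1, c2]
    simp
  have hunit1 : IsUnit (lam • (1 : X →L[ℂ] X) - P) :=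
    ⟨⟨lam • (1 : X →L[ℂ] X) - P, R, hmulL, hmulR⟩, rfl⟩
  have hnormR : ‖R‖ ≤ 4 + 16 * ‖P‖ := by
    have hone : ‖(1 : X →L[ℂ] X)‖ ≤ 1 := by
      rw [ContinuousLinearMap.one_def]
      exact ContinuousLinearMap.norm_id_le
    have hna : ‖a‖ ≤ 4 := by
      rw [ha, norm_inv]
      rw [inv_le_comm₀ (by linarith) (by norm_num)]
      linarith
    have hnb : ‖b‖ ≤ 16 := by
      rw [hb, norm_inv, norm_mul]
      rw [inv_le_comm₀ (by positivity) (by norm_num)]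
      nlinarith
    calc ‖R‖ ≤ ‖a • (1 : X →L[ℂ] X)‖ + ‖b • P‖ := norm_add_le _ _
    _ = ‖a‖ * ‖(1 : X →L[ℂ] X)‖ + ‖b‖ * ‖P‖ := by
        rw [norm_smul a (1 : X →L[ℂ] X), norm_smul b P]
    _ ≤ 4 * 1 + 16 * ‖P‖ := by gcongr
    _ = 4 + 16 * ‖P‖ := by ring
  set E : X →L[ℂ] X := A - P with hE
  have hRE : ‖R * E‖ < 1 := by
    calc ‖R * E‖ ≤ ‖R‖ * ‖E‖ := norm_mul_le _ _
    _ ≤ (4 + 16 * ‖P‖) * ‖E‖ := by gcongr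
    _ = ‖A - P‖ * (4 + 16 * ‖P‖) := by rw [hE]; ring
    _ < 1 := hsmall
  have hunit2 : IsUnit (1 - R * E) := (Units.oneSub (R * E) hRE).isUnit
  have hfact : lam • (1 : X →L[ℂ] X) - A = (lam • (1 : X →L[ℂ] X) - P) * (1 - R * E) := by
    rw [mul_sub, mul_one, ← mul_assoc, hmulL, one_mul, hE]
    abel
  intro hmem
  apply spectrum.notMem_iff.mpr _ hmem
  rw [Algebra.algebraMap_eq_smul_one, hfact]
  exact hunit1.mul hunit2

end Unit

section Spec

variable {X : Type*} [NormedAddCommGroup X] [NormedSpace ℂ X] [CompleteSpace X]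

lemma spec_norm_le_one [Nontrivial X] (T : X →L[ℂ] X) (C : ℝ) (hbd : ∀ n : ℕ, ‖T ^ n‖ ≤ C)
    {z : ℂ} (hz : z ∈ spectrum ℂ T) : ‖z‖ ≤ 1 := by
  by_contra hgt
  push_neg at hgt
  have hpow : ∀ n : ℕ, ‖z‖ ^ n ≤ C := by
    intro n
    have hmem : z ^ n ∈ spectrum ℂ (T ^ n) := by
      have h := spectrum.subset_polynomial_aeval T (Polynomial.X ^ n : Polynomial ℂ) ⟨z, hz, rfl⟩
      simpa using h
    have := spectrum.norm_le_norm_of_mem hmem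
    rw [norm_pow] at this
    exact this.trans (hbd n)
  have := tendsto_pow_atTop_atTop_of_one_lt hgt
  obtain ⟨n, hn⟩ := (this.eventually_gt_atTop C).exists
  exact absurd (hpow n) (not_le.mpr hn)

lemma spec_mfun_mem (T : X →L[ℂ] X) {z : ℂ} (hz : z ∈ spectrum ℂ T) (n : ℕ) :
    mfun n z ∈ spectrum ℂ (cesaroMean T n) := by
  have h := spectrum.subset_polynomial_aeval T (cesPoly n) ⟨z, hz, rfl⟩
  simp only [cesPoly_aeval] at h
  rwa [show Polynomial.eval z (cesPoly n) = mfun n z from cesPoly_eval n z] at h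

end Spec

theorem stmt_4 {X : Type*} [NormedAddCommGroup X] [NormedSpace ℂ X] [CompleteSpace X]
    (T : X →L[ℂ] X) (C : ℝ) (hbd : ∀ n : ℕ, ‖T ^ n‖ ≤ C)
    (hume : ∃ P : X →L[ℂ] X, Tendsto (cesaroMean T) atTop (𝓝 P)) :
    ¬ AccPt (1 : ℂ) (Filter.principal (spectrum ℂ T)) := by
  intro hAcc
  obtain ⟨P, hP⟩ := hume
  rcases subsingleton_or_nontrivial X with hsub | hnt
  · obtain ⟨y, ⟨_, hy⟩, _⟩ := accPt_iff_nhds.mp hAcc Set.univ Filter.univ_mem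
    exact spectrum.mem_iff.mp hy (isUnit_of_subsingleton _)
  · obtain ⟨hTP, hPP⟩ := proj_props T C hbd P hP
    have hKpos : (0:ℝ) < 4 + 16 * ‖P‖ := by positivity
    have hev : ∀ᶠ n in atTop, ‖cesaroMean T n - P‖ * (4 + 16 * ‖P‖) < 1 := by
      have h0 : Tendsto (fun n => ‖cesaroMean T n - P‖ * (4 + 16 * ‖P‖)) atTop (𝓝 0) := by
        have h1 : Tendsto (fun n => ‖cesaroMean T n - P‖) atTop (𝓝 0) :=
          tendsto_iff_norm_sub_tendsto_zero.mp hP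
        simpa using h1.mul_const (4 + 16 * ‖P‖)
      exact h0.eventually_lt_const one_pos
    obtain ⟨N₁, hN₁⟩ := eventually_atTop.mp hev
    set N : ℕ := max N₁ 8 with hN
    have hN8 : (8:ℕ) ≤ N := le_max_right _ _
    have hNpos : (0:ℝ) < N := by
      have : (8:ℝ) ≤ N := by exact_mod_cast hN8
      linarith
    set δ : ℝ := 1 / (4 * ((N:ℝ) + 1)) with hδ
    have hδpos : 0 < δ := by positivity
    obtain ⟨z, ⟨hzball, hzspec⟩, hzne⟩ := accPt_iff_nhds.mp hAcc
      (Metric.ball 1 δ) (Metric.ball_mem_nhds _ hδpos)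
    have hz1 : ‖z - 1‖ < δ := by rwa [Metric.mem_ball, dist_eq_norm] at hzball
    have hzle : ‖z‖ ≤ 1 := spec_norm_le_one T C hbd hzspec
    have hz1pos : 0 < ‖z - 1‖ := norm_pos_iff.mpr (sub_ne_zero.mpr hzne)
    -- dichotomy for n ≥ N
    have dich : ∀ n, N ≤ n → ‖mfun n z‖ < 1/4 ∨ ‖mfun n z - 1‖ < 1/4 := by
      intro n hn
      by_contra hcon
      push_neg at hcon
      exact unit_away P hPP (mfun n z) hcon.1 hcon.2 (cesaroMean T n)
        (hN₁ n (le_trans (le_max_left _ _) hn)) (spec_mfun_mem T hzspec n)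
    -- invariant: Cesàro means of z stay near 1
    have inv : ∀ k : ℕ, ‖mfun (N + k) z - 1‖ < 1/4 := by
      intro k
      induction k with
      | zero =>
        have hb : ‖mfun N z - 1‖ ≤ (N:ℝ) * ‖z - 1‖ := mfun_near_one z hzle N (by omega)
        have : (N:ℝ) * ‖z - 1‖ < (N:ℝ) * δ := by gcongr
        have hNd : (N:ℝ) * δ < 1/4 := by
          rw [hδ, div_eq_mul_inv, ← mul_assoc]
          rw [show (N:ℝ) * 1 = (N:ℝ) by ring]
          rw [mul_inv_lt_iff₀ (by positivity)]
          nlinarith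
        simpa using lt_of_le_of_lt hb (lt_trans this hNd)
      | succ k ih =>
        set n : ℕ := N + k with hn
        have hlow : 3/4 < ‖mfun n z‖ := by
          have h1 : ‖(1:ℂ)‖ - ‖mfun n z‖ ≤ ‖(1:ℂ) - mfun n z‖ := norm_sub_norm_le _ _
          rw [norm_one, norm_sub_rev] at h1
          linarith [ih]
        have hstep : ‖mfun (n+1) z - mfun n z‖ ≤ 2/9 := by
          refine (mfun_step z hzle n).trans ?_
          have h9 : (9:ℝ) ≤ (n:ℝ) + 1 := by
            have : (8:ℕ) ≤ n := le_trans hN8 (Nat.le_add_right _ _)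
            have : (8:ℝ) ≤ (n:ℝ) := by exact_mod_cast this
            linarith
          rw [div_le_div_iff₀ (by linarith) (by norm_num)]
          linarith
        have hlow2 : 1/4 < ‖mfun (n+1) z‖ := by
          have h1 : ‖mfun n z‖ - ‖mfun (n+1) z‖ ≤ ‖mfun n z - mfun (n+1) z‖ :=
            norm_sub_norm_le _ _
          rw [norm_sub_rev] at h1
          linarith
        have : N ≤ n + 1 := by omega
        rcases dich (n+1) this with h | h
        · linarith
        · have : N + (k+1) = n + 1 := by omega
          rwa [this]
    -- final contradiction
    obtain ⟨k, hk⟩ := exists_nat_gt ((8:ℝ) / ‖z - 1‖)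
    set n : ℕ := N + k with hn
    have hnk : ((8:ℝ) / ‖z - 1‖) < (n:ℝ) := by
      refine lt_of_lt_of_le hk ?_
      exact_mod_cast Nat.le_add_left k N
    have hsmall : ‖mfun n z‖ ≤ 2 / ((n:ℝ) * ‖z - 1‖) := mfun_small z hzle hzne n
    have hnz : (8:ℝ) < (n:ℝ) * ‖z - 1‖ := by
      rw [div_lt_iff₀ hz1pos] at hnk
      linarith
    have hq : 2 / ((n:ℝ) * ‖z - 1‖) < 3/4 := by
      rw [div_lt_div_iff₀ (by linarith) (by norm_num)]
      linarith
    have hbig : 3/4 < ‖mfun n z‖ := by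
      have h1 : ‖(1:ℂ)‖ - ‖mfun n z‖ ≤ ‖(1:ℂ) - mfun n z‖ := norm_sub_norm_le _ _
      rw [norm_one, norm_sub_rev] at h1
      linarith [inv k]
    linarith
end

section
/- Let X be a complex Banach space and T ∈ L(X) with sup_n ‖Tⁿ‖ < ∞. Then T is uniformly mean ergodic if and only if (I − T)(X) is a closed subspace of X. -/
/-! Write `M_n` for the Cesàro mean. Everything rests on `M_n (1 - T) = (T - T^(n+1))/n = O(1/n)`
and `1 - M_n = (1 - T) B_n` with `B_n` a mean of partial geometric sums of `T`.

If `M_n → P`, then `P (1 - T) = 0` and `P` commutes with `T`; for large `n` the operator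
`1 - (M_n - P)` is invertible and commutes with `P`, which puts `ker P` inside `(1 - M_n)(X)`.
Hence `(1 - T)(X) = ker P` is closed.

If `(1 - T)(X)` is closed, the open mapping theorem turns `‖M_n (1 - T)‖ = O(1/n)` into
`‖M_n y‖ = O(‖y‖/n)` on `(1 - T)(X)`, and `M_m - M_n = M_m (1 - M_n) - M_n (1 - M_m)` is then
`O(1/m + 1/n)`, so `(M_n)` is Cauchy. -/

open Filter Topology

theorem ContinuousLinearMap.exists_preimage_norm_le_of_isClosed_range
    {𝕜 E F : Type*} [NontriviallyNormedField 𝕜] [NormedAddCommGroup E] [NormedSpace 𝕜 E]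
    [NormedAddCommGroup F] [NormedSpace 𝕜 F] [CompleteSpace E] [CompleteSpace F] (f : E →L[𝕜] F)
    (hf : IsClosed (LinearMap.range (f : E →ₗ[𝕜] F) : Set F)) :
    ∃ c > 0, ∀ y ∈ LinearMap.range (f : E →ₗ[𝕜] F), ∃ x, f x = y ∧ ‖x‖ ≤ c * ‖y‖ := by
  have : CompleteSpace (LinearMap.range (f : E →ₗ[𝕜] F)) := hf.completeSpace_coe
  let g : E →L[𝕜] LinearMap.range (f : E →ₗ[𝕜] F) :=
    f.codRestrict _ (LinearMap.mem_range_self (f : E →ₗ[𝕜] F))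
  have hg : Function.Surjective g := fun ⟨_, x, hx⟩ => ⟨x, Subtype.ext hx⟩
  obtain ⟨c, hc, hpre⟩ := g.exists_preimage_norm_le hg
  refine ⟨c, hc, fun y hy => ?_⟩
  obtain ⟨x, hgx, hx⟩ := hpre ⟨y, hy⟩
  exact ⟨x, congrArg Subtype.val hgx, hx⟩

theorem ContinuousLinearMap.mem_range_one_sub_of_norm_sub_lt_one
    {𝕜 E : Type*} [NontriviallyNormedField 𝕜] [NormedAddCommGroup E] [NormedSpace 𝕜 E]
    [CompleteSpace E] {A P : E →L[𝕜] E} (hAP : ‖A - P‖ < 1) (hcomm : Commute P A)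
    {x : E} (hx : P x = 0) : x ∈ LinearMap.range ((1 - A : E →L[𝕜] E) : E →ₗ[𝕜] E) := by
  -- `1 - A = (1 - (A - P)) - P`, and `1 - (A - P)` is invertible and commutes with `P`.
  let u := Units.oneSub (A - P) hAP
  have hu : Commute P (↑u⁻¹ : E →L[𝕜] E) :=
    ((Commute.one_right P).sub_right (hcomm.sub_right (Commute.refl P))).units_inv_right
  have hPz : P ((↑u⁻¹ : E →L[𝕜] E) x) = 0 := by
    rw [← mul_apply_eq_comp, hu.eq, mul_apply_eq_comp, hx, map_zero]
  have hux : (1 - (A - P)) ((↑u⁻¹ : E →L[𝕜] E) x) = x := by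
    change ((↑u : E →L[𝕜] E) * ↑u⁻¹) x = x
    rw [u.mul_inv, one_apply_eq_self]
  refine ⟨(↑u⁻¹ : E →L[𝕜] E) x, ?_⟩
  change (1 - A) ((↑u⁻¹ : E →L[𝕜] E) x) = x
  calc (1 - A) ((↑u⁻¹ : E →L[𝕜] E) x)
      = (1 - (A - P)) ((↑u⁻¹ : E →L[𝕜] E) x) - P ((↑u⁻¹ : E →L[𝕜] E) x) := by
        simp only [sub_apply, one_apply_eq_self]
        abel
    _ = x := by rw [hux, hPz, sub_zero]

theorem Metric.cauchySeq_of_dist_le_mul_inv_add_inv {α : Type*} [PseudoMetricSpace α]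
    {u : ℕ → α} (K : ℝ)
    (h : ∀ m n, m ≠ 0 → n ≠ 0 → dist (u m) (u n) ≤ K * ((m : ℝ)⁻¹ + (n : ℝ)⁻¹)) :
    CauchySeq u := by
  rw [Metric.cauchySeq_iff]
  intro ε hε
  have hlim : Tendsto (fun N : ℕ => K * ((N : ℝ)⁻¹ + (N : ℝ)⁻¹)) atTop (𝓝 0) := by
    simpa using (tendsto_inv_atTop_nhds_zero_nat.add tendsto_inv_atTop_nhds_zero_nat).const_mul K
  obtain ⟨N, hN0, hNε⟩ := ((eventually_ne_atTop 0).and (hlim.eventually_lt_const hε)).exists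
  have hN : (0 : ℝ) < N := by positivity
  have hK : 0 ≤ K := nonneg_of_mul_nonneg_left (dist_nonneg.trans (h N N hN0 hN0)) (by positivity)
  refine ⟨N, fun m hm n hn => ?_⟩
  have hm0 : m ≠ 0 := (Nat.pos_of_ne_zero hN0).trans_le hm |>.ne'
  have hn0 : n ≠ 0 := (Nat.pos_of_ne_zero hN0).trans_le hn |>.ne'
  calc dist (u m) (u n) ≤ K * ((m : ℝ)⁻¹ + (n : ℝ)⁻¹) := h m n hm0 hn0
    _ ≤ K * ((N : ℝ)⁻¹ + (N : ℝ)⁻¹) := by gcongr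
    _ < ε := hNε

namespace cesaroMean

variable {X : Type*} [NormedAddCommGroup X] [NormedSpace ℂ X] (T : X →L[ℂ] X)

theorem commute_of_commute {S : X →L[ℂ] X} (h : Commute S T) (n : ℕ) :
    Commute S (cesaroMean T n) :=
  (Commute.sum_right _ _ _ fun _ _ => h.pow_right _).smul_right _

theorem commute (m n : ℕ) : Commute (cesaroMean T m) (cesaroMean T n) :=
  commute_of_commute T (commute_of_commute T (Commute.refl T) m).symm n

theorem mul_one_sub (n : ℕ) :
    cesaroMean T n * (1 - T) = (n : ℂ)⁻¹ • (T - T ^ (n + 1)) := by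
  rw [cesaroMean, smul_mul_assoc, Finset.sum_mul]
  congr 1
  simp_rw [mul_sub, mul_one, ← pow_succ]
  simpa using Finset.sum_range_sub' (fun j => T ^ (j + 1)) n

theorem one_sub_mem_range {n : ℕ} (hn : n ≠ 0) (x : X) :
    (1 - cesaroMean T n) x ∈ LinearMap.range ((1 - T : X →L[ℂ] X) : X →ₗ[ℂ] X) := by
  let B : X →L[ℂ] X := (n : ℂ)⁻¹ • ∑ j ∈ Finset.range n, ∑ i ∈ Finset.range (j + 1), T ^ i
  suffices h : 1 - cesaroMean T n = (1 - T) * B from ⟨B x, by rw [h]; rfl⟩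
  have hgeom : ∀ j, (1 - T) * ∑ i ∈ Finset.range (j + 1), T ^ i = 1 - T ^ (j + 1) := fun j => by
    rw [← neg_sub T 1, neg_mul, mul_geom_sum, neg_sub]
  rw [mul_smul_comm, Finset.mul_sum]
  simp_rw [hgeom]
  rw [Finset.sum_sub_distrib, Finset.sum_const, Finset.card_range, smul_sub,
    ← Nat.cast_smul_eq_nsmul ℂ, smul_smul, inv_mul_cancel₀ (by exact_mod_cast hn), one_smul,
    cesaroMean]

variable {T} {C : ℝ} (hbd : ∀ n : ℕ, ‖T ^ n‖ ≤ C)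
include hbd

theorem norm_le (n : ℕ) : ‖cesaroMean T n‖ ≤ C := by
  have hC : 0 ≤ C := (norm_nonneg _).trans (hbd 0)
  rcases Nat.eq_zero_or_pos n with rfl | hn
  · simpa [cesaroMean] using hC
  calc ‖cesaroMean T n‖ ≤ (n : ℝ)⁻¹ * ∑ j ∈ Finset.range n, ‖T ^ (j + 1)‖ := by
        rw [cesaroMean, norm_smul, norm_inv, Complex.norm_natCast]
        gcongr
        exact norm_sum_le _ _
    _ ≤ (n : ℝ)⁻¹ * ∑ _j ∈ Finset.range n, C := by gcongr; exact hbd _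
    _ = C := by field_simp; simp

theorem norm_mul_one_sub_le (n : ℕ) : ‖cesaroMean T n * (1 - T)‖ ≤ 2 * C * (n : ℝ)⁻¹ := by
  rw [mul_one_sub, norm_smul, norm_inv, Complex.norm_natCast, mul_comm]
  gcongr
  calc ‖T - T ^ (n + 1)‖ ≤ ‖T ^ 1‖ + ‖T ^ (n + 1)‖ := by rw [pow_one]; exact norm_sub_le _ _
    _ ≤ 2 * C := by linarith [hbd 1, hbd (n + 1)]

theorem tendsto_mul_one_sub : Tendsto (fun n => cesaroMean T n * (1 - T)) atTop (𝓝 0) :=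
  squeeze_zero_norm (norm_mul_one_sub_le hbd) <| by
    simpa using tendsto_inv_atTop_nhds_zero_nat.const_mul (2 * C)

theorem range_one_sub_eq_ker [CompleteSpace X] {P : X →L[ℂ] X}
    (hP : Tendsto (cesaroMean T) atTop (𝓝 P)) :
    LinearMap.range ((1 - T : X →L[ℂ] X) : X →ₗ[ℂ] X) = LinearMap.ker (P : X →ₗ[ℂ] X) := by
  have hP1 : P * (1 - T) = 0 :=
    tendsto_nhds_unique (hP.mul tendsto_const_nhds) (tendsto_mul_one_sub hbd)
  have hPT : Commute P T := by
    have hcent : P ∈ Set.centralizer {T} :=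
      (Set.isClosed_centralizer _).mem_of_tendsto hP <| Eventually.of_forall fun n => by
        simpa [Set.mem_centralizer_iff] using (commute_of_commute T (Commute.refl T) n).eq
    exact (hcent T rfl).symm
  apply le_antisymm
  · rintro _ ⟨y, rfl⟩
    change (P * (1 - T)) y = 0
    rw [hP1, zero_apply]
  · intro x hx
    obtain ⟨n, hn, hnP⟩ := ((eventually_ne_atTop 0).and
      ((tendsto_iff_norm_sub_tendsto_zero.mp hP).eventually_lt_const one_pos)).exists
    obtain ⟨z, rfl⟩ := ContinuousLinearMap.mem_range_one_sub_of_norm_sub_lt_one hnP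
      (commute_of_commute T hPT n) hx
    exact one_sub_mem_range T hn z

theorem exists_norm_apply_le_of_isClosed_range [CompleteSpace X]
    (hR : IsClosed (LinearMap.range ((1 - T : X →L[ℂ] X) : X →ₗ[ℂ] X) : Set X)) :
    ∃ K ≥ 0, ∀ n, ∀ y ∈ LinearMap.range ((1 - T : X →L[ℂ] X) : X →ₗ[ℂ] X),
      ‖cesaroMean T n y‖ ≤ K * (n : ℝ)⁻¹ * ‖y‖ := by
  have hC : 0 ≤ C := (norm_nonneg _).trans (hbd 0)
  obtain ⟨c, hc, hpre⟩ := (1 - T).exists_preimage_norm_le_of_isClosed_range hR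
  refine ⟨2 * C * c, by positivity, fun n y hy => ?_⟩
  obtain ⟨x, rfl, hx⟩ := hpre y hy
  calc ‖cesaroMean T n ((1 - T) x)‖ = ‖(cesaroMean T n * (1 - T)) x‖ := rfl
    _ ≤ 2 * C * (n : ℝ)⁻¹ * (c * ‖(1 - T) x‖) := (ContinuousLinearMap.le_opNorm _ _).trans <|
        mul_le_mul (norm_mul_one_sub_le hbd n) hx (norm_nonneg _) (by positivity)
    _ = 2 * C * c * (n : ℝ)⁻¹ * ‖(1 - T) x‖ := by ring

theorem cauchySeq_of_isClosed_range [CompleteSpace X]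
    (hR : IsClosed (LinearMap.range ((1 - T : X →L[ℂ] X) : X →ₗ[ℂ] X) : Set X)) :
    CauchySeq (cesaroMean T) := by
  have hC : 0 ≤ C := (norm_nonneg _).trans (hbd 0)
  obtain ⟨K, hK, hdecay⟩ := exists_norm_apply_le_of_isClosed_range hbd hR
  have hterm : ∀ m n, n ≠ 0 → ∀ x,
      ‖cesaroMean T m ((1 - cesaroMean T n) x)‖ ≤ K * (1 + C) * (m : ℝ)⁻¹ * ‖x‖ := by
    intro m n hn x
    have hres : ‖(1 - cesaroMean T n) x‖ ≤ (1 + C) * ‖x‖ :=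
      (ContinuousLinearMap.le_opNorm _ _).trans <| by
        gcongr
        exact (norm_sub_le _ _).trans (add_le_add ContinuousLinearMap.norm_id_le (norm_le hbd n))
    calc ‖cesaroMean T m ((1 - cesaroMean T n) x)‖
        ≤ K * (m : ℝ)⁻¹ * ‖(1 - cesaroMean T n) x‖ := hdecay m _ (one_sub_mem_range T hn x)
      _ ≤ K * (m : ℝ)⁻¹ * ((1 + C) * ‖x‖) := by gcongr
      _ = K * (1 + C) * (m : ℝ)⁻¹ * ‖x‖ := by ring
  refine Metric.cauchySeq_of_dist_le_mul_inv_add_inv (K * (1 + C)) fun m n hm hn => ?_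
  rw [dist_eq_norm]
  refine ContinuousLinearMap.opNorm_le_bound _ (by positivity) fun x => ?_
  have hsplit : (cesaroMean T m - cesaroMean T n) x =
      cesaroMean T m ((1 - cesaroMean T n) x) - cesaroMean T n ((1 - cesaroMean T m) x) := by
    simp only [sub_apply, one_apply_eq_self, map_sub]
    rw [← mul_apply_eq_comp, (commute T m n).eq, mul_apply_eq_comp]
    abel
  calc ‖(cesaroMean T m - cesaroMean T n) x‖
      ≤ K * (1 + C) * (m : ℝ)⁻¹ * ‖x‖ + K * (1 + C) * (n : ℝ)⁻¹ * ‖x‖ := by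
        rw [hsplit]
        exact (norm_sub_le _ _).trans (add_le_add (hterm m n hn x) (hterm n m hm x))
    _ = K * (1 + C) * ((m : ℝ)⁻¹ + (n : ℝ)⁻¹) * ‖x‖ := by ring

end cesaroMean

/-- Dunford–Lin: uniform mean ergodicity is equivalent to closedness of `(I - T)(X)`. -/
theorem stmt_5 {X : Type*} [NormedAddCommGroup X] [NormedSpace ℂ X] [CompleteSpace X]
    (T : X →L[ℂ] X) (C : ℝ) (hbd : ∀ n : ℕ, ‖T ^ n‖ ≤ C) :
    (∃ P : X →L[ℂ] X, Tendsto (cesaroMean T) atTop (𝓝 P)) ↔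
      IsClosed ((LinearMap.range ((1 - T : X →L[ℂ] X) : X →ₗ[ℂ] X) : Submodule ℂ X) : Set X) := by
  constructor
  · rintro ⟨P, hP⟩
    rw [cesaroMean.range_one_sub_eq_ker hbd hP]
    exact P.isClosed_ker
  · exact fun hR => cauchySeq_tendsto_of_complete (cesaroMean.cauchySeq_of_isClosed_range hbd hR)
end

section
/- Let X be a complex Banach space and T ∈ L(X) a quasi-compact operator with sup_n ‖Tⁿ‖ < ∞. Then the Cesàro means T_{[n]} = (1/n)∑_{j=1}^n T^j converge in operator norm to a finite rank projection. -/
open Filter Topology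

/-- `T` is quasi-compact if some power of `T` is at distance `< 1` from a compact operator. -/
def QuasiCompact {X : Type*} [NormedAddCommGroup X] [NormedSpace ℂ X]
    (T : X →L[ℂ] X) : Prop :=
  ∃ n : ℕ, 1 ≤ n ∧ ∃ K : X →L[ℂ] X, IsCompactOperator K ∧ ‖T ^ n - K‖ < 1

/-!
Write `T ^ m = K + (T ^ m - K)` with `K` compact and `‖T ^ m - K‖ < 1`. Inverting `1 - (T ^ m - K)`
by a Neumann series gives `B * (1 - T) = 1 - K'` with `K'` compact. Riesz's compactness argument
then shows that `ker (1 - T)` is finite dimensional and that `1 - T` is bounded below on a closed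
complement of it, so every vector in the range of `1 - T` has a preimage of comparable norm.
Writing `M = cesaroMean T`, the operator `1 - M k` factors through `1 - T`, and
`‖M n * (1 - T)‖ ≤ 2 C / n`; together this yields `‖M n * (1 - M k)‖ = O(1 / n)` uniformly in `k`.
The means commute, so `(M n)` is Cauchy in operator norm. Its limit `P` satisfies
`P * (1 - P) = 0` and `(1 - T) * P = 0`: a projection whose range lies in `ker (1 - T)`.
-/

section CompactPerturbation

open ContinuousLinearMap

variable {𝕜 E : Type*} [RCLike 𝕜] [NormedAddCommGroup E] [NormedSpace 𝕜 E]

theorem IsCompactOperator.finiteDimensional_ker_one_sub {K : E →L[𝕜] E}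
    (hK : IsCompactOperator K) :
    FiniteDimensional 𝕜 (LinearMap.ker ((1 - K : E →L[𝕜] E) : E →ₗ[𝕜] E)) := by
  set N := LinearMap.ker ((1 - K : E →L[𝕜] E) : E →ₗ[𝕜] E)
  have hfix : ∀ v ∈ N, K v = v := fun v hv => (sub_eq_zero.mp hv).symm
  have hKN : ∀ v ∈ N, K v ∈ N := fun v hv => (hfix v hv).symm ▸ hv
  have hid : ⇑((K : E →ₗ[𝕜] E).restrict hKN) = id := funext fun v => Subtype.ext (hfix v v.2)
  exact .of_isCompactOperator_id (hid ▸ hK.restrict hKN (isClosed_ker _))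

theorem finiteDimensional_ker_of_one_sub_eq_mul {A B K : E →L[𝕜] E}
    (hK : IsCompactOperator K) (hBA : 1 - K = B * A) :
    FiniteDimensional 𝕜 (LinearMap.ker (A : E →ₗ[𝕜] E)) :=
  have := hK.finiteDimensional_ker_one_sub
  Submodule.finiteDimensional_of_le (S₂ := LinearMap.ker ((1 - K : E →L[𝕜] E) : E →ₗ[𝕜] E))
    fun x (hx : A x = 0) => show (1 - K) x = 0 by rw [hBA, mul_apply_eq_comp, hx, map_zero]

theorem IsCompactOperator.exists_subseq_tendsto_of_tendsto_sub {K : E →L[𝕜] E}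
    (hK : IsCompactOperator K) {u : ℕ → E} {r : ℝ} (hu : ∀ j, ‖u j‖ ≤ r)
    (hlim : Tendsto (fun j => u j - K (u j)) atTop (𝓝 0)) :
    ∃ w, ∃ φ : ℕ → ℕ, StrictMono φ ∧ Tendsto (fun j => u (φ j)) atTop (𝓝 w) := by
  obtain ⟨S, hS, hKS⟩ := hK.image_closedBall_subset_compact r
  obtain ⟨w, -, φ, hφ, hKw⟩ :=
    hS.tendsto_subseq fun j => hKS ⟨u j, mem_closedBall_zero_iff.mpr (hu j), rfl⟩
  refine ⟨w, φ, hφ, ?_⟩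
  simpa using (hlim.comp hφ.tendsto_atTop).add hKw

theorem exists_seq_mem_norm_eq_one_tendsto_zero {F : Type*} [NormedAddCommGroup F] [NormedSpace 𝕜 F]
    (A : E →L[𝕜] F) (M : Submodule 𝕜 E) (h : ∀ c, 0 ≤ c → ∃ x ∈ M, c * ‖A x‖ < ‖x‖) :
    ∃ u : ℕ → E, (∀ j, u j ∈ M ∧ ‖u j‖ = 1) ∧ Tendsto (fun j => A (u j)) atTop (𝓝 0) := by
  choose x hxM hx using fun j : ℕ => h (j + 1) (by positivity)
  have hx0 : ∀ j, 0 < ‖x j‖ := fun j => (by positivity : (0 : ℝ) ≤ _).trans_lt (hx j)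
  refine ⟨fun j => (‖x j‖⁻¹ : 𝕜) • x j, fun j => ⟨M.smul_mem _ (hxM j),
    norm_smul_inv_norm (norm_pos_iff.mp (hx0 j))⟩, ?_⟩
  refine squeeze_zero_norm (fun j => ?_) tendsto_one_div_add_atTop_nhds_zero_nat
  rw [map_smul, norm_smul, norm_inv, RCLike.norm_ofReal, abs_norm, inv_mul_le_iff₀ (hx0 j),
    mul_one_div, le_div_iff₀ (by positivity), mul_comm]
  exact (hx j).le

theorem exists_norm_le_mul_norm_of_one_sub_eq_mul {A B K : E →L[𝕜] E}
    (hK : IsCompactOperator K) (hBA : 1 - K = B * A) {M : Submodule 𝕜 E}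
    (hM : IsClosed (M : Set E)) (hMA : Disjoint M (LinearMap.ker (A : E →ₗ[𝕜] E))) :
    ∃ c, 0 ≤ c ∧ ∀ x ∈ M, ‖x‖ ≤ c * ‖A x‖ := by
  by_contra! h
  obtain ⟨u, hu, hAu⟩ := exists_seq_mem_norm_eq_one_tendsto_zero A M h
  have hKu : Tendsto (fun j => u j - K (u j)) atTop (𝓝 0) := by
    have := (B.continuous.tendsto 0).comp hAu
    simp only [map_zero] at this
    refine this.congr fun j => ?_
    simp [← mul_apply_eq_comp, ← hBA]
  obtain ⟨w, φ, hφ, huw⟩ := hK.exists_subseq_tendsto_of_tendsto_sub (fun j => (hu j).2.le) hKu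
  have hwM : w ∈ M := hM.mem_of_tendsto huw (Eventually.of_forall fun j => (hu _).1)
  have hAw : A w = 0 :=
    tendsto_nhds_unique ((A.continuous.tendsto w).comp huw) (hAu.comp hφ.tendsto_atTop)
  have hw1 : ‖w‖ = 1 := tendsto_nhds_unique huw.norm (by simp [hu])
  simp [Submodule.disjoint_def.mp hMA w hwM hAw] at hw1

theorem exists_bounded_preimage_of_one_sub_eq_mul {A B K : E →L[𝕜] E}
    (hK : IsCompactOperator K) (hBA : 1 - K = B * A) :
    ∃ c, 0 ≤ c ∧ ∀ x, ∃ g, A g = A x ∧ ‖g‖ ≤ c * ‖A x‖ := by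
  have := finiteDimensional_ker_of_one_sub_eq_mul hK hBA
  set N := LinearMap.ker (A : E →ₗ[𝕜] E)
  obtain ⟨f, hf⟩ := Submodule.ClosedComplemented.of_finiteDimensional N
  have hdisj : Disjoint (LinearMap.ker (f : E →ₗ[𝕜] N)) N :=
    Submodule.disjoint_def.mpr fun x hfx hAx =>
      congr_arg Subtype.val ((hf ⟨x, hAx⟩).symm.trans hfx)
  obtain ⟨c, hc, hbelow⟩ :=
    exists_norm_le_mul_norm_of_one_sub_eq_mul hK hBA (isClosed_ker f) hdisj
  refine ⟨c, hc, fun x => ?_⟩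
  have hAg : A (x - f x) = A x := by rw [map_sub, show A (f x) = 0 from (f x).2, sub_zero]
  refine ⟨x - f x, hAg, hAg ▸ hbelow _ ?_⟩
  show f (x - f x) = 0
  rw [map_sub, hf, sub_self]

end CompactPerturbation

section CesaroMean

variable {X : Type*} [NormedAddCommGroup X] [NormedSpace ℂ X] (T : X →L[ℂ] X)

theorem commute_cesaroMean (n : ℕ) : Commute T (cesaroMean T n) :=
  (Commute.sum_right _ _ _ fun j _ => (Commute.refl T).pow_right (j + 1)).smul_right _

theorem commute_cesaroMean_cesaroMean (n k : ℕ) : Commute (cesaroMean T n) (cesaroMean T k) :=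
  (Commute.sum_left _ _ _ fun j _ => ((commute_cesaroMean T k).pow_left (j + 1))).smul_left _

theorem cesaroMean_mul_one_sub (n : ℕ) :
    cesaroMean T n * (1 - T) = (n : ℂ)⁻¹ • (T - T ^ (n + 1)) := by
  rw [cesaroMean, smul_mul_assoc, Finset.sum_mul]
  simp_rw [mul_sub, mul_one, ← pow_succ]
  rw [Finset.sum_range_sub' (fun i => T ^ (i + 1)), zero_add, pow_one]

theorem one_sub_mul_cesaroMean (n : ℕ) :
    (1 - T) * cesaroMean T n = (n : ℂ)⁻¹ • (T - T ^ (n + 1)) := by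
  rw [((Commute.one_left _).sub_left (commute_cesaroMean T n)).eq,
    cesaroMean_mul_one_sub]

theorem exists_one_sub_cesaroMean_eq_one_sub_mul {n : ℕ} (hn : n ≠ 0) :
    ∃ R : X →L[ℂ] X, 1 - cesaroMean T n = (1 - T) * R := by
  refine ⟨(n : ℂ)⁻¹ • ∑ j ∈ Finset.range n, ∑ i ∈ Finset.range (j + 1), T ^ i, ?_⟩
  rw [mul_smul_comm, Finset.mul_sum]
  simp_rw [mul_neg_geom_sum]
  rw [Finset.sum_sub_distrib, Finset.sum_const, Finset.card_range, smul_sub,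
    ← Nat.cast_smul_eq_nsmul ℂ, smul_smul, inv_mul_cancel₀ (Nat.cast_ne_zero.mpr hn), one_smul]
  rfl

variable {T} {C : ℝ} (hbd : ∀ n, ‖T ^ n‖ ≤ C)
include hbd

theorem norm_cesaroMean_le (n : ℕ) : ‖cesaroMean T n‖ ≤ C := by
  rcases eq_or_ne n 0 with rfl | hn
  · simpa [cesaroMean] using (norm_nonneg _).trans (hbd 0)
  calc ‖cesaroMean T n‖ ≤ (n : ℝ)⁻¹ * ∑ j ∈ Finset.range n, ‖T ^ (j + 1)‖ := by
        rw [cesaroMean, norm_smul, norm_inv, Complex.norm_natCast]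
        gcongr
        exact norm_sum_le _ _
    _ ≤ (n : ℝ)⁻¹ * (n * C) := by
        gcongr
        simpa using Finset.sum_le_sum fun j (_ : j ∈ Finset.range n) => hbd (j + 1)
    _ = C := by field_simp

theorem norm_cesaroMean_mul_one_sub_le (n : ℕ) : ‖cesaroMean T n * (1 - T)‖ ≤ 2 * C / n := by
  rw [cesaroMean_mul_one_sub, norm_smul, norm_inv, Complex.norm_natCast, inv_mul_eq_div]
  gcongr
  calc ‖T - T ^ (n + 1)‖ ≤ ‖T ^ 1‖ + ‖T ^ (n + 1)‖ := by rw [pow_one]; exact norm_sub_le _ _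
    _ ≤ 2 * C := by linarith [hbd 1, hbd (n + 1)]

end CesaroMean

section UniformErgodic

open ContinuousLinearMap

variable {X : Type*} [NormedAddCommGroup X] [NormedSpace ℂ X] {T : X →L[ℂ] X} {C c : ℝ}
  (hbd : ∀ n, ‖T ^ n‖ ≤ C) (hc : 0 ≤ c)
  (hpre : ∀ x, ∃ g, (1 - T) g = (1 - T) x ∧ ‖g‖ ≤ c * ‖(1 - T) x‖)
include hbd hc hpre

theorem norm_cesaroMean_mul_one_sub_cesaroMean_le (n : ℕ) {k : ℕ} (hk : k ≠ 0) :
    ‖cesaroMean T n * (1 - cesaroMean T k)‖ ≤ 2 * C * (c * (1 + C)) / n := by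
  have hC : 0 ≤ C := (norm_nonneg _).trans (hbd 0)
  obtain ⟨R, hR⟩ := exists_one_sub_cesaroMean_eq_one_sub_mul T hk
  refine opNorm_le_bound _ (by positivity) fun z => ?_
  obtain ⟨g, hg, hgz⟩ := hpre (R z)
  have hz : (1 - T) (R z) = z - cesaroMean T k z := by
    rw [← mul_apply_eq_comp, ← hR]; rfl
  have hzC : ‖z - cesaroMean T k z‖ ≤ (1 + C) * ‖z‖ := by
    calc _ ≤ ‖z‖ + ‖cesaroMean T k‖ * ‖z‖ :=
          (norm_sub_le _ _).trans (add_le_add_right (le_opNorm _ _) _)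
      _ ≤ (1 + C) * ‖z‖ := by nlinarith [norm_cesaroMean_le hbd k, norm_nonneg z]
  calc ‖(cesaroMean T n * (1 - cesaroMean T k)) z‖ = ‖(cesaroMean T n * (1 - T)) g‖ := by
        rw [mul_apply_eq_comp, mul_apply_eq_comp, hg, hz]; rfl
    _ ≤ 2 * C / n * (c * ((1 + C) * ‖z‖)) := by
        refine (le_opNorm _ _).trans ?_
        gcongr
        · exact norm_cesaroMean_mul_one_sub_le hbd n
        · exact hgz.trans (by rw [hz]; gcongr)
    _ = 2 * C * (c * (1 + C)) / n * ‖z‖ := by ring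

theorem norm_cesaroMean_sub_cesaroMean_le {n k : ℕ} (hn : n ≠ 0) (hk : k ≠ 0) :
    ‖cesaroMean T n - cesaroMean T k‖ ≤
      2 * C * (c * (1 + C)) / n + 2 * C * (c * (1 + C)) / k := by
  have hsplit : cesaroMean T n - cesaroMean T k =
      cesaroMean T n * (1 - cesaroMean T k) - cesaroMean T k * (1 - cesaroMean T n) := by
    rw [mul_sub, mul_sub, mul_one, mul_one, (commute_cesaroMean_cesaroMean T n k).eq]
    abel
  rw [hsplit]
  exact (norm_sub_le _ _).trans <| add_le_add
    (norm_cesaroMean_mul_one_sub_cesaroMean_le hbd hc hpre n hk)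
    (norm_cesaroMean_mul_one_sub_cesaroMean_le hbd hc hpre k hn)

theorem cauchySeq_cesaroMean_succ : CauchySeq fun n => cesaroMean T (n + 1) := by
  have hD : 0 ≤ 2 * C * (c * (1 + C)) := by
    have := (norm_nonneg _).trans (hbd 0); positivity
  refine cauchySeq_of_le_tendsto_0' (fun n => 2 * (2 * C * (c * (1 + C))) / ((n + 1 : ℕ) : ℝ))
    (fun n m hnm => ?_) ((tendsto_const_div_atTop_nhds_zero_nat _).comp (tendsto_add_atTop_nat 1))
  rw [dist_eq_norm, two_mul, add_div]
  refine (norm_cesaroMean_sub_cesaroMean_le hbd hc hpre n.succ_ne_zero m.succ_ne_zero).trans ?_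
  gcongr
  omega

theorem exists_tendsto_cesaroMean_of_bounded_preimage [CompleteSpace X] :
    ∃ P, Tendsto (cesaroMean T) atTop (𝓝 P) ∧ P * P = P ∧ (1 - T) * P = 0 := by
  obtain ⟨P, hP⟩ := cauchySeq_tendsto_of_complete (cauchySeq_cesaroMean_succ hbd hc hpre)
  replace hP : Tendsto (cesaroMean T) atTop (𝓝 P) := (tendsto_add_atTop_iff_nat 1).mp hP
  have hPP : P * (1 - P) = 0 := by
    have hbound (n : ℕ) : ‖cesaroMean T n * (1 - P)‖ ≤ 2 * C * (c * (1 + C)) / n :=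
      le_of_tendsto ((tendsto_const_nhds.sub hP).const_mul (cesaroMean T n)).norm
        ((eventually_ne_atTop 0).mono fun k hk =>
          norm_cesaroMean_mul_one_sub_cesaroMean_le hbd hc hpre n hk)
    exact tendsto_nhds_unique (hP.mul_const _)
      (squeeze_zero_norm hbound (tendsto_const_div_atTop_nhds_zero_nat _))
  have hTP : (1 - T) * P = 0 := by
    have hbound (n : ℕ) : ‖(1 - T) * cesaroMean T n‖ ≤ 2 * C / n := by
      rw [one_sub_mul_cesaroMean, ← cesaroMean_mul_one_sub]
      exact norm_cesaroMean_mul_one_sub_le hbd n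
    exact tendsto_nhds_unique (hP.const_mul _)
      (squeeze_zero_norm hbound (tendsto_const_div_atTop_nhds_zero_nat _))
  refine ⟨P, hP, ?_, hTP⟩
  rwa [mul_sub, mul_one, sub_eq_zero, eq_comm] at hPP

end UniformErgodic

theorem QuasiCompact.exists_isCompactOperator_one_sub_eq_mul {X : Type*} [NormedAddCommGroup X]
    [NormedSpace ℂ X] [CompleteSpace X] {T : X →L[ℂ] X} (hT : QuasiCompact T) :
    ∃ B K : X →L[ℂ] X, IsCompactOperator K ∧ 1 - K = B * (1 - T) := by
  obtain ⟨m, -, K, hK, hlt⟩ := hT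
  set U := Units.oneSub (T ^ m - K) hlt
  refine ⟨↑U⁻¹ * ∑ i ∈ Finset.range m, T ^ i, ↑U⁻¹ * K, hK.clm_comp _, ?_⟩
  have hU : (1 : X →L[ℂ] X) - T ^ m = U - K := by rw [Units.val_oneSub]; abel
  rw [mul_assoc, geom_sum_mul_neg, hU, mul_sub, Units.inv_mul]

/-- Yosida–Kakutani: a power-bounded quasi-compact operator is uniformly mean ergodic,
with limit a finite rank projection. -/
theorem stmt_6 {X : Type*} [NormedAddCommGroup X] [NormedSpace ℂ X] [CompleteSpace X]
    (T : X →L[ℂ] X) (hqc : QuasiCompact T) (C : ℝ) (hbd : ∀ n : ℕ, ‖T ^ n‖ ≤ C) :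
    ∃ P : X →L[ℂ] X, Tendsto (cesaroMean T) atTop (𝓝 P) ∧
      P ∘L P = P ∧ FiniteDimensional ℂ (LinearMap.range (P : X →ₗ[ℂ] X)) := by
  obtain ⟨B, K, hK, hBK⟩ := hqc.exists_isCompactOperator_one_sub_eq_mul
  obtain ⟨c, hc, hpre⟩ := exists_bounded_preimage_of_one_sub_eq_mul hK hBK
  obtain ⟨P, hP, hPP, hTP⟩ := exists_tendsto_cesaroMean_of_bounded_preimage hbd hc hpre
  have := finiteDimensional_ker_of_one_sub_eq_mul hK hBK
  have hrange :
      LinearMap.range (P : X →ₗ[ℂ] X) ≤ LinearMap.ker ((1 - T : X →L[ℂ] X) : X →ₗ[ℂ] X) := by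
    rintro _ ⟨z, rfl⟩
    exact congr($hTP z)
  exact ⟨P, hP, hPP, Submodule.finiteDimensional_of_le hrange⟩
end

section
/- Let Ω ⊆ ℂ be an open connected set, a ∈ Ω, X a complex Banach space, and H ⊆ X* a subspace of the dual that separates the points of X. If f : Ω \ {a} → X is holomorphic and for each x* ∈ H the scalar function x* ∘ f admits a holomorphic extension to all of Ω, then f itself admits a holomorphic extension to Ω. -/
open Metric Set Complex MeasureTheory

/-- Grosse-Erdmann; Bonet–Frerick–Jordá: a Banach-space-valued function holomorphic off a
point, all of whose compositions with members of a separating subspace of the dual extend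
holomorphically, extends holomorphically itself. -/
theorem stmt_11 {X : Type*} [NormedAddCommGroup X] [NormedSpace ℂ X] [CompleteSpace X]
    (Ω : Set ℂ) (hΩ : IsOpen Ω) (hconn : IsConnected Ω) (a : ℂ) (ha : a ∈ Ω)
    (H : Submodule ℂ (X →L[ℂ] ℂ))
    (hsep : ∀ x : X, x ≠ 0 → ∃ l ∈ H, l x ≠ 0)
    (f : ℂ → X) (hf : DifferentiableOn ℂ f (Ω \ {a}))
    (hext : ∀ l ∈ H, ∃ g : ℂ → ℂ, DifferentiableOn ℂ g Ω ∧
      ∀ z ∈ Ω \ {a}, g z = l (f z)) :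
    ∃ F : ℂ → X, DifferentiableOn ℂ F Ω ∧ ∀ z ∈ Ω \ {a}, F z = f z := by
  classical
  obtain ⟨R, hR0, hRΩ⟩ : ∃ R > 0, closedBall a R ⊆ Ω := by
    rcases (Metric.nhds_basis_closedBall.mem_iff).1 (hΩ.mem_nhds ha) with ⟨R, hR0, h⟩
    exact ⟨R, hR0, h⟩
  have hopen : IsOpen (Ω \ {a}) := hΩ.sdiff isClosed_singleton
  have hfd : ∀ z ∈ Ω \ {a}, DifferentiableAt ℂ f z := fun z hz =>
    hf.differentiableAt (hopen.mem_nhds hz)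
  have hfc : ContinuousOn f (Ω \ {a}) := hf.continuousOn
  have hsph : ∀ {ρ : ℝ}, 0 < ρ → ρ ≤ R → sphere a ρ ⊆ Ω \ {a} := by
    intro ρ h0 hle z hz
    rw [mem_sphere] at hz
    exact ⟨hRΩ (mem_closedBall.2 (hz.le.trans hle)),
      fun h => h0.ne' (by simpa [Set.mem_singleton_iff.1 h] using hz.symm)⟩
  -- continuity of the Cauchy kernel
  have hkercont : ∀ (w : ℂ) (s : Set ℂ), (∀ z ∈ s, z ≠ w) →
      ContinuousOn (fun z : ℂ => (z - w)⁻¹) s := fun w s hs =>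
    ((continuous_sub_right w).continuousOn).inv₀ fun z hz => sub_ne_zero.2 (hs z hz)
  have hnesphere : ∀ {ρ : ℝ} {w : ℂ}, w ∉ sphere a ρ → ∀ z ∈ sphere a ρ, z ≠ w :=
    fun hw z hz h => hw (h ▸ hz)
  -- circle integrability of the Cauchy kernel against f
  have hci : ∀ {ρ : ℝ}, 0 < ρ → ρ ≤ R → ∀ {w : ℂ}, w ∉ sphere a ρ →
      CircleIntegrable (fun z => (z - w)⁻¹ • f z) a ρ := by
    intro ρ h0 hle w hw
    exact ContinuousOn.circleIntegrable h0.le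
      ((hkercont w _ (hnesphere hw)).smul (hfc.mono (hsph h0 hle)))
  have hkint : ∀ {ρ : ℝ} {w : ℂ} (v : X), 0 ≤ ρ → w ∉ sphere a ρ →
      CircleIntegrable (fun z : ℂ => (z - w)⁻¹ • v) a ρ := by
    intro ρ w v h0 hw
    exact ContinuousOn.circleIntegrable h0
      ((hkercont w _ (hnesphere hw)).smul continuousOn_const)
  -- the inner circle integral vanishes, by the separating functionals
  have hzero : ∀ r : ℝ, 0 < r → r ≤ R → ∀ w : ℂ, w ∉ closedBall a r →
      (∮ z in C(a, r), (z - w)⁻¹ • f z) = 0 := by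
    intro r hr0 hrR w hw
    by_contra hne
    obtain ⟨l, hl, hlne⟩ := hsep _ hne
    obtain ⟨g, hg, hgf⟩ := hext l hl
    apply hlne
    have hwz : ∀ z ∈ closedBall a r, z ≠ w := fun z hz h => hw (h ▸ hz)
    have hci' := hci hr0 hrR (fun h => hw (sphere_subset_closedBall h))
    have key : l (∮ z in C(a, r), (z - w)⁻¹ • f z) = ∮ z in C(a, r), (z - w)⁻¹ • g z := by
      simp only [circleIntegral]
      rw [← ContinuousLinearMap.intervalIntegral_comp_comm l hci'.out]
      refine intervalIntegral.integral_congr fun θ _ => ?_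
      simp only [ContinuousLinearMap.map_smul]
      rw [hgf _ (hsph hr0 hrR (circleMap_mem_sphere a hr0.le θ))]
    rw [key]
    refine Complex.circleIntegral_eq_zero_of_differentiable_on_off_countable hr0.le
      Set.countable_empty ?_ ?_
    · exact (hkercont w _ hwz).smul
        (hg.continuousOn.mono fun z hz => hRΩ (closedBall_subset_closedBall hrR hz))
    · intro z hz
      have hzc : z ∈ closedBall a r := ball_subset_closedBall hz.1
      exact ((differentiableAt_id.sub_const w).inv (sub_ne_zero.2 (hwz z hzc))).smul
        (hg.differentiableAt (hΩ.mem_nhds (hRΩ (closedBall_subset_closedBall hrR hzc))))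
  -- the Cauchy-integral candidate extension
  set F : ℂ → X := fun w => (2 * Real.pi * I : ℂ)⁻¹ • ∮ z in C(a, R), (z - w)⁻¹ • f z with hF
  have hfciR : CircleIntegrable f a R :=
    ContinuousOn.circleIntegrable hR0.le (hfc.mono (hsph hR0 le_rfl))
  have hFdiff : DifferentiableOn ℂ F (ball a R) := by
    lift R to NNReal using hR0.le with R' hR'
    have h2 := (hasFPowerSeriesOn_cauchy_integral hfciR (by exact_mod_cast hR0)).differentiableOn
    rw [Metric.emetric_ball_nnreal] at h2
    rw [hF]
    exact h2
  -- F agrees with f on the punctured ball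
  have hFf : ∀ w ∈ ball a R \ {a}, F w = f w := by
    rintro w ⟨hwR, hwa⟩
    have hwa' : w ≠ a := by simpa using hwa
    set r : ℝ := dist w a / 2 with hr
    have hd0 : 0 < dist w a := dist_pos.2 hwa'
    have hr0 : 0 < r := by positivity
    have hrw : r < dist w a := by rw [hr]; linarith
    have hrR : r ≤ R := le_of_lt (lt_of_lt_of_le hrw (le_of_lt (mem_ball.1 hwR)))
    have hwcb : w ∉ closedBall a r := by
      simp only [mem_closedBall, not_le]; exact hrw
    have hwann : w ∈ ball a R \ closedBall a r := ⟨hwR, hwcb⟩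
    have hsub : closedBall a R \ ball a r ⊆ Ω \ {a} := by
      rintro z ⟨h1, h2⟩
      refine ⟨hRΩ h1, fun h => h2 ?_⟩
      simp only [Set.mem_singleton_iff] at h
      simpa [h] using hr0
    have hGc : ContinuousOn (dslope f w) (closedBall a R \ ball a r) := by
      rw [continuousOn_dslope]
      · exact ⟨hfc.mono hsub, hfd w ⟨hRΩ (ball_subset_closedBall hwR), by simpa using hwa'⟩⟩
      · refine mem_nhds_iff.2 ⟨ball a R \ closedBall a r, ?_,
          isOpen_ball.sdiff isClosed_closedBall, hwann⟩
        exact Set.diff_subset_diff ball_subset_closedBall ball_subset_closedBall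
    have hGd : ∀ z ∈ (ball a R \ closedBall a r) \ ({w} : Set ℂ),
        DifferentiableAt ℂ (dslope f w) z := by
      rintro z ⟨hz1, hz2⟩
      refine (differentiableAt_dslope_of_ne (by simpa using hz2)).2 ?_
      exact hfd z (hsub ⟨ball_subset_closedBall hz1.1,
        fun h => hz1.2 (ball_subset_closedBall h)⟩)
    have hann := Complex.circleIntegral_eq_of_differentiable_on_annulus_off_countable hr0 hrR
      (Set.countable_singleton w) hGc hGd
    have hwsR : w ∉ sphere a R := fun h => (mem_ball.1 hwR).ne (mem_sphere.1 h)
    have hwsr : w ∉ sphere a r := fun h => hwcb (sphere_subset_closedBall h)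
    have hEq : ∀ {ρ : ℝ}, 0 < ρ → ρ ≤ R → w ∉ sphere a ρ →
        (∮ z in C(a, ρ), dslope f w z) =
          (∮ z in C(a, ρ), (z - w)⁻¹ • f z) - (∮ z in C(a, ρ), (z - w)⁻¹) • f w := by
      intro ρ h0 hle hws
      have h1 : EqOn (dslope f w) (fun z => (z - w)⁻¹ • f z - (z - w)⁻¹ • f w) (sphere a ρ) := by
        intro z hz
        have hzw : z ≠ w := fun h => hws (h ▸ hz)
        calc dslope f w z = (z - w)⁻¹ • (f z - f w) := Function.update_of_ne hzw _ _
          _ = (z - w)⁻¹ • f z - (z - w)⁻¹ • f w := smul_sub _ _ _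
      rw [circleIntegral.integral_congr h0.le h1,
        circleIntegral.integral_sub (hci h0 hle hws) (hkint (f w) h0.le hws),
        circleIntegral.integral_smul_const]
    have hker : (∮ z in C(a, r), (z - w)⁻¹) = 0 := by
      refine Complex.circleIntegral_eq_zero_of_differentiable_on_off_countable hr0.le
        Set.countable_empty (hkercont w _ fun z hz h => hwcb (h ▸ hz)) ?_
      intro z hz
      exact (differentiableAt_id.sub_const w).inv
        (sub_ne_zero.2 fun h => hwcb (h ▸ ball_subset_closedBall hz.1))
    rw [hEq hR0 le_rfl hwsR, hEq hr0 hrR hwsr, hzero r hr0 hrR w hwcb,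
      circleIntegral.integral_sub_inv_of_mem_ball hwR, hker, zero_smul, sub_zero,
      sub_eq_zero] at hann
    show (2 * Real.pi * I : ℂ)⁻¹ • (∮ z in C(a, R), (z - w)⁻¹ • f z) = f w
    rw [hann, inv_smul_smul₀ Complex.two_pi_I_ne_zero]
  -- glue the two pieces
  refine ⟨fun z => if z ∈ ball a R then F z else f z, ?_, ?_⟩
  · intro z hz
    by_cases hzb : z ∈ ball a R
    · refine DifferentiableAt.differentiableWithinAt ?_
      refine (hFdiff.differentiableAt (isOpen_ball.mem_nhds hzb)).congr_of_eventuallyEq ?_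
      exact Filter.eventuallyEq_of_mem (isOpen_ball.mem_nhds hzb)
        fun y hy => by simp only [if_pos hy]
    · have hza : z ≠ a := fun h => hzb (h ▸ mem_ball_self hR0)
      have hz' : z ∈ Ω \ {a} := ⟨hz, by simpa using hza⟩
      refine DifferentiableAt.differentiableWithinAt ?_
      refine (hfd z hz').congr_of_eventuallyEq ?_
      refine Filter.eventuallyEq_of_mem (hopen.mem_nhds hz') fun y hy => ?_
      by_cases hyb : y ∈ ball a R
      · simp only [if_pos hyb]; exact hFf y ⟨hyb, hy.2⟩
      · simp only [if_neg hyb]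
  · intro z hz
    by_cases hzb : z ∈ ball a R
    · simp only [if_pos hzb]; exact hFf z ⟨hzb, hz.2⟩
    · simp only [if_neg hzb]
end

section
/- Let X be a complex Banach space and T ∈ L(X) with sup_n ‖Tⁿ‖ < ∞. If 1 ∉ σ(T) or 1 is a pole of order 1 of the resolvent z ↦ (zI − T)⁻¹, then T is uniformly mean ergodic, i.e., the Cesàro means T_{[n]} = (1/n)∑_{j=1}^n T^j converge in operator norm. -/
open Filter Topology

lemma cesaro_key {X : Type*} [NormedAddCommGroup X] [NormedSpace ℂ X] [CompleteSpace X]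
    (T : X →L[ℂ] X) (C : ℝ) (hbd : ∀ n : ℕ, ‖T ^ n‖ ≤ C)
    (P S : X →L[ℂ] X) (hP : T * P = P) (hS : (1 - T) * S = 1 - P) :
    Tendsto (cesaroMean T) atTop (𝓝 P) := by
  have hC : 0 ≤ C := le_trans (norm_nonneg _) (hbd 0)
  have hpowP : ∀ j : ℕ, T ^ (j + 1) * P = P := by
    intro j
    induction j with
    | zero => simpa using hP
    | succ k ih =>
      have : T ^ (k + 1 + 1) = T * T ^ (k + 1) := (pow_succ' T (k+1))
      rw [this, mul_assoc, ih, hP]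
  have key : ∀ n : ℕ, 1 ≤ n →
      cesaroMean T n - P = ((n : ℂ)⁻¹ • (T ^ 1 - T ^ (n + 1))) * S := by
    intro n hn
    have hn0 : (n : ℂ) ≠ 0 := Nat.cast_ne_zero.mpr (by omega)
    have h1 : cesaroMean T n * P = P := by
      unfold cesaroMean
      rw [smul_mul_assoc, Finset.sum_mul]
      rw [Finset.sum_congr rfl fun j _ => hpowP j, Finset.sum_const, Finset.card_range]
      rw [← Nat.cast_smul_eq_nsmul ℂ, smul_smul, inv_mul_cancel₀ hn0, one_smul]
    have h2 : cesaroMean T n * (1 - T) = (n : ℂ)⁻¹ • (T ^ 1 - T ^ (n + 1)) := by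
      unfold cesaroMean
      rw [smul_mul_assoc, Finset.sum_mul]
      congr 1
      have hterm : ∀ j ∈ Finset.range n,
          T ^ (j + 1) * (1 - T) = T ^ (j + 1) - T ^ (j + 1 + 1) := by
        intro j _
        rw [mul_sub, mul_one, ← pow_succ]
      rw [Finset.sum_congr rfl hterm]
      exact Finset.sum_range_sub' (fun j => T ^ (j + 1)) n
    calc cesaroMean T n - P
        = cesaroMean T n * ((1 - T) * S) + (cesaroMean T n * P - P) := by
          rw [hS]; noncomm_ring
      _ = ((n : ℂ)⁻¹ • (T ^ 1 - T ^ (n + 1))) * S := by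
          rw [h1, ← mul_assoc, h2, sub_self, add_zero]
  rw [← tendsto_sub_nhds_zero_iff]
  have hb : ∀ᶠ n in atTop, ‖cesaroMean T n - P‖ ≤ (1 / (n : ℝ)) * (2 * C * ‖S‖) := by
    filter_upwards [eventually_ge_atTop 1] with n hn
    rw [key n hn]
    calc ‖((n : ℂ)⁻¹ • (T ^ 1 - T ^ (n + 1))) * S‖
        ≤ ‖(n : ℂ)⁻¹ • (T ^ 1 - T ^ (n + 1))‖ * ‖S‖ := norm_mul_le _ _
      _ ≤ (‖((n : ℂ))⁻¹‖ * ‖T ^ 1 - T ^ (n + 1)‖) * ‖S‖ :=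
          mul_le_mul_of_nonneg_right (norm_smul_le _ _) (norm_nonneg S)
      _ ≤ ((1 / (n : ℝ)) * (2 * C)) * ‖S‖ := by
          apply mul_le_mul_of_nonneg_right _ (norm_nonneg S)
          have h1 : ‖((n : ℂ))⁻¹‖ = 1 / (n : ℝ) := by
            rw [norm_inv, Complex.norm_natCast, one_div]
          rw [h1]
          apply mul_le_mul_of_nonneg_left _ (by positivity)
          calc ‖T ^ 1 - T ^ (n + 1)‖ ≤ ‖T ^ 1‖ + ‖T ^ (n + 1)‖ := norm_sub_le _ _
            _ ≤ C + C := add_le_add (hbd 1) (hbd (n + 1))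
            _ = 2 * C := by ring
      _ = (1 / (n : ℝ)) * (2 * C * ‖S‖) := by ring
  exact squeeze_zero_norm' hb
    (by simpa using tendsto_one_div_atTop_nhds_zero_nat.mul_const (2 * C * ‖S‖))

/-- Dunford's theorem: if `1 ∉ σ(T)`, or `1` is a pole of order `1` of the resolvent
(`z ↦ (z-1)R(z,T)` extends holomorphically near `1`), then a power-bounded `T` is
uniformly mean ergodic. -/
theorem stmt_12 {X : Type*} [NormedAddCommGroup X] [NormedSpace ℂ X] [CompleteSpace X]
    (T : X →L[ℂ] X) (C : ℝ) (hbd : ∀ n : ℕ, ‖T ^ n‖ ≤ C)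
    (hpole : (1 : ℂ) ∉ spectrum ℂ T ∨
      ∃ U ∈ 𝓝 (1 : ℂ), (∀ z ∈ U, z ≠ 1 → z ∉ spectrum ℂ T) ∧
        ∃ g : ℂ → X →L[ℂ] X, DifferentiableOn ℂ g U ∧
          ∀ z ∈ U, z ≠ 1 → g z = (z - 1) • resolvent T z) :
    ∃ P : X →L[ℂ] X, Tendsto (cesaroMean T) atTop (𝓝 P) := by
  rcases hpole with h1 | ⟨U, hU, hspecU, g, hgdiff, hgeq⟩
  · have hunit : IsUnit ((1 : X →L[ℂ] X) - T) := by
      have := spectrum.notMem_iff.mp h1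
      simpa using this
    refine ⟨0, cesaro_key T C hbd 0 (Ring.inverse ((1 : X →L[ℂ] X) - T)) (by simp) ?_⟩
    rw [Ring.mul_inverse_cancel _ hunit]; simp
  · have hd : DifferentiableAt ℂ g 1 := hgdiff.differentiableAt hU
    set P := g 1 with hPdef
    set S := deriv g 1 with hSdef
    have hevU : ∀ᶠ z in 𝓝[≠] (1 : ℂ), z ∈ U ∧ z ≠ 1 := by
      filter_upwards [eventually_nhdsWithin_of_eventually_nhds
        (eventually_of_mem hU fun z hz => hz), self_mem_nhdsWithin] with z h1 h2
      exact ⟨h1, h2⟩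
    have hres : ∀ z ∈ U, z ≠ 1 →
        (z • (1 : X →L[ℂ] X) - T) * g z = (z - 1) • 1 := by
      intro z hz hz1
      have hu : IsUnit (algebraMap ℂ (X →L[ℂ] X) z - T) :=
        spectrum.notMem_iff.mp (hspecU z hz hz1)
      rw [hgeq z hz hz1, mul_smul_comm, resolvent,
        show z • (1 : X →L[ℂ] X) = algebraMap ℂ (X →L[ℂ] X) z from
          (Algebra.algebraMap_eq_smul_one z).symm,
        Ring.mul_inverse_cancel _ hu]
    have hcont1 : Tendsto (fun z : ℂ => z • (1 : X →L[ℂ] X) - T) (𝓝[≠] 1)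
        (𝓝 ((1 : ℂ) • (1 : X →L[ℂ] X) - T)) := by
      apply Tendsto.mono_left _ nhdsWithin_le_nhds
      exact ((continuous_id.smul continuous_const).sub continuous_const).continuousAt
    have hTP : T * P = P := by
      have hlim1 : Tendsto (fun z : ℂ => (z • (1 : X →L[ℂ] X) - T) * g z) (𝓝[≠] 1)
          (𝓝 (((1 : ℂ) • (1 : X →L[ℂ] X) - T) * P)) :=
        hcont1.mul (hd.continuousAt.continuousWithinAt)
      have heq : (fun z : ℂ => (z • (1 : X →L[ℂ] X) - T) * g z)
          =ᶠ[𝓝[≠] (1 : ℂ)] (fun z => (z - 1) • (1 : X →L[ℂ] X)) := by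
        filter_upwards [hevU] with z hz
        exact hres z hz.1 hz.2
      have hlim2 : Tendsto (fun z : ℂ => (z - 1) • (1 : X →L[ℂ] X)) (𝓝[≠] 1) (𝓝 0) := by
        have : Tendsto (fun z : ℂ => (z - 1) • (1 : X →L[ℂ] X)) (𝓝 1)
            (𝓝 (((1 : ℂ) - 1) • (1 : X →L[ℂ] X))) :=
          ((continuous_id.sub continuous_const).smul continuous_const).continuousAt
        simpa using this.mono_left nhdsWithin_le_nhds
      have hkey := tendsto_nhds_unique (hlim1.congr' heq) hlim2
      have : ((1 : X →L[ℂ] X) - T) * P = 0 := by rwa [one_smul] at hkey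
      rw [sub_mul, one_mul, sub_eq_zero] at this
      exact this.symm
    have hSid : ((1 : X →L[ℂ] X) - T) * S = 1 - P := by
      have hslope : Tendsto (slope g 1) (𝓝[≠] 1) (𝓝 S) :=
        hasDerivAt_iff_tendsto_slope.mp hd.hasDerivAt
      have hlim1 : Tendsto (fun z : ℂ => (z • (1 : X →L[ℂ] X) - T) * slope g 1 z) (𝓝[≠] 1)
          (𝓝 (((1 : ℂ) • (1 : X →L[ℂ] X) - T) * S)) := hcont1.mul hslope
      have heq : (fun z : ℂ => (z • (1 : X →L[ℂ] X) - T) * slope g 1 z)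
          =ᶠ[𝓝[≠] (1 : ℂ)] (fun _ => (1 : X →L[ℂ] X) - P) := by
        filter_upwards [hevU] with z hz
        have hz1 : z - 1 ≠ 0 := sub_ne_zero.mpr hz.2
        have hPz : (z • (1 : X →L[ℂ] X) - T) * P = (z - 1) • P := by
          rw [sub_mul, smul_mul_assoc, one_mul, hTP, sub_smul, one_smul]
        rw [slope_def_module, mul_smul_comm, mul_sub, hres z hz.1 hz.2, hPz,
          ← smul_sub, smul_smul, inv_mul_cancel₀ hz1, one_smul]
      have hkey := tendsto_nhds_unique (hlim1.congr' heq) tendsto_const_nhds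
      rwa [one_smul] at hkey
    exact ⟨P, cesaro_key T C hbd P S hTP hSid⟩
end

section
/- Let G be a group and φ : G → ℂ a positive definite function with φ(e) = 1 such that some power is uniformly close to an indicator: for some k ∈ ℕ, ‖φ^k − 𝟙_{H}‖_∞ < 1 where H = {x : φ(x) = 1}. Then for every x ∈ G with |φ(x)| = 1 one has φ(x) = 1; that is, E_φ = H_φ. -/
open scoped ComplexOrder

/-- Positive definiteness of `φ : G → ℂ` on a group. -/
def IsPositiveDefinite {G : Type*} [Group G] (φ : G → ℂ) : Prop :=
  ∀ (n : ℕ) (x : Fin n → G) (c : Fin n → ℂ),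
    0 ≤ ∑ i, ∑ j, c i * (starRingEnd ℂ) (c j) * φ ((x j)⁻¹ * x i)

theorem stmt_13_general {G : Type*} [Group G] (φ : G → ℂ)
    (hso : ∃ k : ℕ, ∃ C : ℝ, C < 1 ∧ ∀ x : G,
      ‖(φ x) ^ k - Set.indicator {x : G | φ x = 1} (fun _ => (1 : ℂ)) x‖ ≤ C) :
    ∀ x : G, ‖φ x‖ = 1 → φ x = 1 := by
  obtain ⟨k, C, hC, hbound⟩ := hso
  intro x hx
  by_contra hne
  have hoff : x ∉ {x : G | φ x = 1} := hne
  -- off `H` the indicator vanishes, so the bound reads `‖φ x‖ ^ k = 1 ≤ C`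
  have hxk := hbound x
  rw [Set.indicator_of_notMem hoff, sub_zero, norm_pow, hx, one_pow] at hxk
  linarith

theorem stmt_13 {G : Type*} [Group G] (φ : G → ℂ) (hφ : IsPositiveDefinite φ)
    (he : φ 1 = 1)
    (hso : ∃ k : ℕ, ∃ C : ℝ, C < 1 ∧ ∀ x : G,
      ‖(φ x) ^ k - Set.indicator {x : G | φ x = 1} (fun _ => (1 : ℂ)) x‖ ≤ C) :
    ∀ x : G, ‖φ x‖ = 1 → φ x = 1 :=
  stmt_13_general φ hso
end

section
/- Let X be a complex Banach space, Y ⊆ X a closed hyperplane (codimension-one closed subspace), and T ∈ L(X) with sup_n ‖Tⁿ‖ < ∞ and T(Y) ⊆ Y. If the restriction T|_Y : Y → Y is uniformly mean ergodic, then T is uniformly mean ergodic. -/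
open Filter Topology

/-!
Write `Y = ker f` and pick `x₀` with `f x₀ = 1`, so that `X = Y ⊕ ℂ x₀`. On `Y` the Cesàro means
`M_n` of `T` are those of `S`, so it suffices that `M_n x₀` converges. As `T` preserves `ker f`,
`T x₀ = λ x₀ + u` with `u ∈ Y`, and `M_n (T - 1) → 0` because `T` is power bounded.
If `λ ≠ 1`, then `(λ - 1) M_n x₀ = M_n (T - 1) x₀ - M_n u → -P u`.
If `λ = 1`, then `u = (T - 1) x₀` forces `P u = 0`. Uniform convergence `M_n(S) → P` puts `ker P`
inside the range of `1 - S`, so `u = v - S v` and `x₀ + v` is a fixed point of `T`.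
-/

theorem exists_tendsto_of_tendsto_comp_subtype_ker {𝕜 E F ι : Type*} [NontriviallyNormedField 𝕜]
    [NormedAddCommGroup E] [NormedSpace 𝕜 E] [NormedAddCommGroup F] [NormedSpace 𝕜 F]
    {l : Filter ι} {f : E →L[𝕜] 𝕜} {x₀ : E} (hx₀ : f x₀ = 1) {A : ι → E →L[𝕜] F}
    {B : LinearMap.ker (f : E →ₗ[𝕜] 𝕜) →L[𝕜] F} {q : F}
    (hB : Tendsto (fun i => (A i).comp (LinearMap.ker (f : E →ₗ[𝕜] 𝕜)).subtypeL) l (𝓝 B))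
    (hq : Tendsto (fun i => A i x₀) l (𝓝 q)) :
    ∃ Q, Tendsto A l (𝓝 Q) := by
  have hR : Function.RightInverse (ContinuousLinearMap.toSpanSingleton 𝕜 x₀) f := fun c => by
    simp [hx₀]
  set π := f.projKerOfRightInverse _ hR
  have hsplit : ∀ i, A i =
      ((A i).comp (LinearMap.ker (f : E →ₗ[𝕜] 𝕜)).subtypeL).comp π + f.smulRight (A i x₀) := by
    intro i
    ext x
    simp only [add_apply, ContinuousLinearMap.comp_apply, Submodule.subtypeL_apply, π,
      ContinuousLinearMap.coe_projKerOfRightInverse_apply, ContinuousLinearMap.smulRight_apply,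
      ContinuousLinearMap.toSpanSingleton_apply, map_sub, map_smul, sub_add_cancel]
  refine ⟨B.comp π + f.smulRight q, ?_⟩
  rw [funext hsplit]
  exact (((continuous_id.clm_comp_const π).tendsto B).comp hB).add
    (((ContinuousLinearMap.smulRightL 𝕜 E F f).continuous.tendsto q).comp hq)

section Cesaro

variable {E F : Type*} [NormedAddCommGroup E] [NormedSpace ℂ E]
  [NormedAddCommGroup F] [NormedSpace ℂ F]

theorem cesaroMean_apply_eq_self {T : E →L[ℂ] E} {x : E} (hx : T x = x) {n : ℕ} (hn : n ≠ 0) :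
    cesaroMean T n x = x := by
  have hpow : ∀ k, (T ^ k) x = x := fun k => by
    rw [FunLike.coe_pow_eq_iterate]; exact Function.iterate_fixed hx k
  simp [cesaroMean, hpow, ← Nat.cast_smul_eq_nsmul ℂ, smul_smul,
    inv_mul_cancel₀ (Nat.cast_ne_zero.mpr hn : (n : ℂ) ≠ 0)]

theorem tendsto_cesaroMean_apply_of_apply_eq_self {T : E →L[ℂ] E} {x : E} (hx : T x = x) :
    Tendsto (fun n => cesaroMean T n x) atTop (𝓝 x) :=
  tendsto_const_nhds.congr' <| (eventually_ne_atTop 0).mono fun _ hn =>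
    (cesaroMean_apply_eq_self hx hn).symm

theorem cesaroMean_mul_sub_one (T : E →L[ℂ] E) (n : ℕ) :
    cesaroMean T n * (T - 1) = (n : ℂ)⁻¹ • (T ^ (n + 1) - T) := by
  rw [cesaroMean, smul_mul_assoc, Finset.sum_mul]
  simp_rw [mul_sub, mul_one, ← pow_succ]
  rw [Finset.sum_range_sub (fun j => T ^ (j + 1)), zero_add, pow_one]

theorem tendsto_cesaroMean_mul_sub_one {T : E →L[ℂ] E} {C : ℝ} (hbd : ∀ n, ‖T ^ n‖ ≤ C) :
    Tendsto (fun n => cesaroMean T n * (T - 1)) atTop (𝓝 0) := by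
  refine squeeze_zero_norm (fun n => ?_) (tendsto_const_div_atTop_nhds_zero_nat (2 * C))
  rw [cesaroMean_mul_sub_one, norm_smul, norm_inv, Complex.norm_natCast, ← div_eq_inv_mul]
  gcongr
  calc ‖T ^ (n + 1) - T‖ ≤ ‖T ^ (n + 1)‖ + ‖T ^ 1‖ := by rw [pow_one]; exact norm_sub_le _ _
    _ ≤ 2 * C := by linarith [hbd (n + 1), hbd 1]

theorem Commute.cesaroMean_left {T A : E →L[ℂ] E} (h : Commute T A) (n : ℕ) :
    Commute (cesaroMean T n) A :=
  (Commute.sum_left _ _ _ fun j _ => h.pow_left (j + 1)).smul_left _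

theorem cesaroMean_comp_of_comp_eq {T : E →L[ℂ] E} {S : F →L[ℂ] F} {J : F →L[ℂ] E}
    (h : T.comp J = J.comp S) (n : ℕ) :
    (cesaroMean T n).comp J = J.comp (cesaroMean S n) := by
  have hpow : ∀ k, (T ^ k).comp J = J.comp (S ^ k) := by
    intro k
    induction k with
    | zero => rfl
    | succ k ih =>
      rw [pow_succ, pow_succ, ContinuousLinearMap.mul_def, ContinuousLinearMap.mul_def,
        ContinuousLinearMap.comp_assoc, h, ← ContinuousLinearMap.comp_assoc, ih,
        ContinuousLinearMap.comp_assoc]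
  simp only [cesaroMean, ContinuousLinearMap.smul_comp, ContinuousLinearMap.comp_smul,
    ContinuousLinearMap.finsetSum_comp, ContinuousLinearMap.comp_finsetSum, hpow]

theorem one_sub_cesaroMean_eq_mul (T : E →L[ℂ] E) {n : ℕ} (hn : n ≠ 0) :
    1 - cesaroMean T n =
      (1 - T) * ((n : ℂ)⁻¹ • ∑ j ∈ Finset.range n, ∑ i ∈ Finset.range (j + 1), T ^ i) := by
  rw [mul_smul_comm, Finset.mul_sum]
  simp_rw [mul_neg_geom_sum]
  rw [Finset.sum_sub_distrib, smul_sub, Finset.sum_const, Finset.card_range,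
    ← Nat.cast_smul_eq_nsmul ℂ, smul_smul, inv_mul_cancel₀ (Nat.cast_ne_zero.mpr hn), one_smul,
    cesaroMean]

theorem commute_of_tendsto_cesaroMean {T P : E →L[ℂ] E}
    (hP : Tendsto (cesaroMean T) atTop (𝓝 P)) (m : ℕ) : Commute P (cesaroMean T m) := by
  have hcomm : ∀ n, Commute (cesaroMean T n) (cesaroMean T m) := fun n =>
    ((Commute.refl T).cesaroMean_left m).symm.cesaroMean_left n
  refine tendsto_nhds_unique (hP.mul_const _) ?_
  simp_rw [fun n => (hcomm n).eq]
  exact hP.const_mul _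

theorem exists_sub_apply_eq_of_tendsto_cesaroMean [CompleteSpace E] {T P : E →L[ℂ] E}
    (hP : Tendsto (cesaroMean T) atTop (𝓝 P)) {u : E} (hu : P u = 0) :
    ∃ v, v - T v = u := by
  obtain ⟨N, hN, hclose⟩ : ∃ N, N ≠ 0 ∧ ‖cesaroMean T N - P‖ < 1 :=
    ((eventually_ne_atTop 0).and
      ((tendsto_iff_norm_sub_tendsto_zero.mp hP).eventually_lt_const one_pos)).exists
  -- `P` commutes with `G := M_N - P`, hence with `(1 - G)⁻¹`, so `s := (1 - G)⁻¹ u ∈ ker P`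
  -- and `u = (1 - G) s = (1 - M_N) s`, which lies in the range of `1 - T`.
  set W := Units.oneSub _ hclose
  have hPW : Commute P ↑W⁻¹ := Commute.units_inv_right <|
    (Commute.one_right P).sub_right ((commute_of_tendsto_cesaroMean hP N).sub_right (.refl P))
  set s := (↑W⁻¹ : E →L[ℂ] E) u
  have hPs : P s = 0 := by
    rw [← mul_apply_eq_comp, hPW.eq, mul_apply_eq_comp, hu, map_zero]
  have hu_eq : u = (1 - cesaroMean T N) s := by
    have : u = (W : E →L[ℂ] E) s := by simp [s, ← mul_apply_eq_comp]
    simpa [W, hPs] using this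
  refine ⟨((N : ℂ)⁻¹ • ∑ j ∈ Finset.range N, ∑ i ∈ Finset.range (j + 1), T ^ i) s, ?_⟩
  rw [hu_eq, one_sub_cesaroMean_eq_mul T hN]
  rfl

theorem exists_tendsto_cesaroMean_apply_of_restrict_ker [CompleteSpace E] {f : E →L[ℂ] ℂ} {x₀ : E}
    (hx₀ : f x₀ = 1) {T : E →L[ℂ] E} {C : ℝ} (hbd : ∀ n, ‖T ^ n‖ ≤ C)
    {S : LinearMap.ker (f : E →ₗ[ℂ] ℂ) →L[ℂ] LinearMap.ker (f : E →ₗ[ℂ] ℂ)}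
    (hTS : T.comp (LinearMap.ker (f : E →ₗ[ℂ] ℂ)).subtypeL =
      (LinearMap.ker (f : E →ₗ[ℂ] ℂ)).subtypeL.comp S)
    {P : LinearMap.ker (f : E →ₗ[ℂ] ℂ) →L[ℂ] LinearMap.ker (f : E →ₗ[ℂ] ℂ)}
    (hP : Tendsto (cesaroMean S) atTop (𝓝 P)) :
    ∃ q, Tendsto (fun n => cesaroMean T n x₀) atTop (𝓝 q) := by
  set ι := (LinearMap.ker (f : E →ₗ[ℂ] ℂ)).subtypeL
  have hS : ∀ y, T (ι y) = ι (S y) := DFunLike.congr_fun hTS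
  have hM : ∀ y, Tendsto (fun n => cesaroMean T n (ι y)) atTop (𝓝 (ι (P y))) := fun y => by
    simp_rw [← ContinuousLinearMap.comp_apply, cesaroMean_comp_of_comp_eq hTS]
    exact (((continuous_const.clm_comp continuous_id).clm_apply continuous_const).tendsto P).comp hP
  have hw : Tendsto (fun n => cesaroMean T n (T x₀ - x₀)) atTop (𝓝 0) := by
    simpa [Function.comp_def, mul_apply_eq_comp] using
      ((ContinuousLinearMap.apply ℂ E x₀).continuous.tendsto 0).comp
        (tendsto_cesaroMean_mul_sub_one hbd)
  set lam := f (T x₀)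
  set u : LinearMap.ker (f : E →ₗ[ℂ] ℂ) := ⟨T x₀ - lam • x₀, by simp [lam, hx₀]⟩
  by_cases hlam : lam = 1
  · have hu : T x₀ - x₀ = ι u := by
      change T x₀ - x₀ = T x₀ - lam • x₀
      rw [hlam, one_smul]
    have hPu : P u = 0 := by
      rw [hu] at hw
      simpa [ι] using tendsto_nhds_unique (hM u) hw
    obtain ⟨v, hv⟩ := exists_sub_apply_eq_of_tendsto_cesaroMean hP hPu
    have hfix : T (x₀ + ι v) = x₀ + ι v := by
      rw [map_add, hS, eq_sub_of_add_eq' (sub_add_cancel v (S v)), hv, map_sub, ← hu]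
      abel
    refine ⟨x₀ + ι v - ι (P v), ?_⟩
    simpa using (tendsto_cesaroMean_apply_of_apply_eq_self hfix).sub (hM v)
  · refine ⟨(lam - 1)⁻¹ • (0 - ι (P u)),
      ((hw.sub (hM u)).const_smul (lam - 1)⁻¹).congr fun n => ?_⟩
    have hx : T x₀ - x₀ - ι u = (lam - 1) • x₀ := by
      simp only [ι, u, Submodule.subtypeL_apply]
      module
    rw [← map_sub, hx, map_smul, smul_smul, inv_mul_cancel₀ (sub_ne_zero.mpr hlam), one_smul]

end Cesaro

theorem stmt_16_general {X : Type*} [NormedAddCommGroup X] [NormedSpace ℂ X] [CompleteSpace X]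
    (Y : Submodule ℂ X) (f : X →L[ℂ] ℂ) (hf : f ≠ 0) (hY : Y = LinearMap.ker (f : X →ₗ[ℂ] ℂ))
    (T : X →L[ℂ] X) (C : ℝ) (hbd : ∀ n : ℕ, ‖T ^ n‖ ≤ C)
    (S : Y →L[ℂ] Y) (hS : ∀ y : Y, (S y : X) = T y)
    (hume : ∃ P : Y →L[ℂ] Y, Tendsto (cesaroMean S) atTop (𝓝 P)) :
    ∃ Q : X →L[ℂ] X, Tendsto (cesaroMean T) atTop (𝓝 Q) := by
  subst hY
  obtain ⟨P, hP⟩ := hume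
  obtain ⟨x₀, hx₀⟩ : ∃ x₀, f x₀ = 1 := by
    obtain ⟨x, hx⟩ := DFunLike.ne_iff.mp hf
    exact ⟨(f x)⁻¹ • x, by simpa using inv_mul_cancel₀ hx⟩
  have hTS : T.comp (LinearMap.ker (f : X →ₗ[ℂ] ℂ)).subtypeL =
      (LinearMap.ker (f : X →ₗ[ℂ] ℂ)).subtypeL.comp S := by
    ext y
    exact (hS y).symm
  obtain ⟨q, hq⟩ := exists_tendsto_cesaroMean_apply_of_restrict_ker hx₀ hbd hTS hP
  refine exists_tendsto_of_tendsto_comp_subtype_ker hx₀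
    (B := (LinearMap.ker (f : X →ₗ[ℂ] ℂ)).subtypeL.comp P) ?_ hq
  simp_rw [cesaroMean_comp_of_comp_eq hTS]
  exact ((continuous_const.clm_comp continuous_id).tendsto P).comp hP

/-- If a power-bounded operator restricts to a closed hyperplane (the kernel of a nonzero
continuous functional) and the restriction is uniformly mean ergodic, then so is the
operator itself. -/
theorem stmt_16 {X : Type*} [NormedAddCommGroup X] [NormedSpace ℂ X] [CompleteSpace X]
    (Y : Submodule ℂ X) (f : X →L[ℂ] ℂ) (hf : f ≠ 0) (hY : Y = LinearMap.ker (f : X →ₗ[ℂ] ℂ))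
    (T : X →L[ℂ] X) (C : ℝ) (hbd : ∀ n : ℕ, ‖T ^ n‖ ≤ C)
    (hinv : ∀ y ∈ Y, T y ∈ Y)
    (S : Y →L[ℂ] Y) (hS : ∀ y : Y, (S y : X) = T y)
    (hume : ∃ P : Y →L[ℂ] Y, Tendsto (cesaroMean S) atTop (𝓝 P)) :
    ∃ Q : X →L[ℂ] X, Tendsto (cesaroMean T) atTop (𝓝 Q) :=
  stmt_16_general Y f hf hY T C hbd S hS hume
end
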